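/- arXiv:1402.6261 — 3 statements merged into one kernel-verified Lean document; each statement's English description precedes it below -/
import Mathlib

section
/- Let f be an electrical affine permutation for n, and suppose i ∈ ℤ satisfies i < f(i) < f(i+1). Then the representative of i+1 in [2n] belongs to I_{i+1}(f), the representative of i−1 in [2n] belongs to J_i(f), and f(i+1) < i+2n−1. -/
open Finset

noncomputable section
open scoped Classical

/-- The cyclic (clockwise) half-open interval `(a, b]` in `Fin m`. -/
def cIoc {m : ℕ} (a b : Fin m) : Finset (Fin m) :=
  univ.filter fun k => if a < b then a < k ∧ k ≤ b else a < k ∨ k ≤ b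

/-- The open cyclic (clockwise) arc from `a` to `b` in `Fin m`, excluding both endpoints. -/
def cIoo {m : ℕ} (a b : Fin m) : Finset (Fin m) :=
  univ.filter fun k => if a < b then a < k ∧ k < b else (a < k ∨ k < b) ∧ k ≠ a ∧ k ≠ b

/-- Set partitions of `[n] = Fin n`. -/
abbrev NCP (n : ℕ) := Finpartition (univ : Finset (Fin n))

/-- `a` and `b` lie in the same block of `σ`. -/
def sameBlock {n : ℕ} (σ : NCP n) (a b : Fin n) : Prop :=
  ∃ B ∈ σ.parts, a ∈ B ∧ b ∈ B

/-- `σ` is a noncrossing partition: there are no `a < b < c < d` with `a, c` in one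
block and `b, d` in a different block. -/
def IsNoncrossing {n : ℕ} (σ : NCP n) : Prop :=
  ∀ a b c d : Fin n, a < b → b < c → c < d →
    sameBlock σ a c → sameBlock σ b d → sameBlock σ a b

/-- The relation defining the dual (Kreweras complement) partition: `ĩ ~ j̃` iff no block
of `σ` meets both cyclic intervals `{(i+1), …, j}` and `{(j+1), …, i}`. -/
def dualRel {n : ℕ} (σ : NCP n) (i j : Fin n) : Prop :=
  i = j ∨ ¬ ∃ B ∈ σ.parts, (B ∩ cIoc i j).Nonempty ∧ (B ∩ cIoc j i).Nonempty

/-- The point `ī` of `[2n]` (0-based: `ī = 2i`). -/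
def bar {n : ℕ} (i : Fin n) : Fin (2*n) := ⟨2*(i:ℕ), by have := i.isLt; omega⟩

/-- The point `ĩ` of `[2n]` (0-based: `ĩ = 2i+1`). -/
def til {n : ℕ} (i : Fin n) : Fin (2*n) := ⟨2*(i:ℕ)+1, by have := i.isLt; omega⟩

/-- A matching (fixed-point-free involution) of `Fin m`. -/
def IsMatching {m : ℕ} (τ : Fin m → Fin m) : Prop :=
  Function.Involutive τ ∧ ∀ i, τ i ≠ i

/-- A noncrossing matching: there are no `a < b < c < d` with `τ a = c` and `τ b = d`. -/
def IsNCMatching {m : ℕ} (τ : Fin m → Fin m) : Prop :=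
  ¬ ∃ a b c d : Fin m, a < b ∧ b < c ∧ c < d ∧ τ a = c ∧ τ b = d

/-- `j` is the cyclic predecessor of `i` in the block of `σ` containing `i`
(`j = i` when `i` is a singleton). -/
def cyclicPred {n : ℕ} (σ : NCP n) (j i : Fin n) : Prop :=
  ∃ B ∈ σ.parts, i ∈ B ∧ j ∈ B ∧ ∀ x ∈ B, x ∉ cIoo j i

/-- `m` is the medial pairing of `σ`: it pairs `ī` (0-based `2i`) with `j̃` (0-based `2j+1`),
where `j` is the cyclic predecessor of `i` in its block. -/
def IsMedialOf {n : ℕ} (σ : NCP n) (m : Fin (2*n) → Fin (2*n)) : Prop :=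
  ∀ i j : Fin n, m (bar i) = til j ↔ cyclicPred σ j i

/-- The crossing number of a matching: the number of pairs `{a,b}` with
`a < b < τ a < τ b`. -/
def crossNum {m : ℕ} (τ : Fin m → Fin m) : ℕ :=
  ((univ : Finset (Fin m × Fin m)).filter fun p =>
    p.1 < p.2 ∧ p.2 < τ p.1 ∧ τ p.1 < τ p.2).card

/-- `a`, `b`, `c`, `d` are distinct and in cyclic order on `Fin m`. -/
def CyclicOrder4 {m : ℕ} (a b c d : Fin m) : Prop :=
  (a < b ∧ b < c ∧ c < d) ∨ (b < c ∧ c < d ∧ d < a) ∨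
  (c < d ∧ d < a ∧ a < b) ∨ (d < a ∧ a < b ∧ b < c)

/-- `τ` covers `τ'` in the uncrossing order. -/
def UncrossCover {m : ℕ} (τ' τ : Fin m → Fin m) : Prop :=
  IsMatching τ' ∧ IsMatching τ ∧
  ∃ a b c d : Fin m, CyclicOrder4 a b c d ∧ τ a = c ∧ τ b = d ∧
    (∀ x, x ≠ a → x ≠ b → x ≠ c → x ≠ d → τ' x = τ x) ∧
    ((τ' a = d ∧ τ' b = c ∧ ∀ x ∈ cIoo a b, τ x ∉ cIoo c d) ∨
     (τ' a = b ∧ τ' c = d ∧ ∀ x ∈ cIoo b c, τ x ∉ cIoo d a))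

/-- The uncrossing partial order on matchings: reflexive-transitive closure of covers. -/
def uncrossLE {m : ℕ} (τ' τ : Fin m → Fin m) : Prop :=
  Relation.ReflTransGen UncrossCover τ' τ

/-- An affine permutation of period `m`. -/
def IsAffinePerm (m : ℕ) (f : ℤ → ℤ) : Prop :=
  Function.Bijective f ∧ ∀ i : ℤ, f (i + m) = f i + m

/-- The length of an affine permutation of period `m`:
`#{(i,j) : 1 ≤ i ≤ m, i < j, f i > f j}`. -/
def affLen (m : ℕ) (f : ℤ → ℤ) : ℕ :=
  Set.ncard {p : ℤ × ℤ | 1 ≤ p.1 ∧ p.1 ≤ (m:ℤ) ∧ p.1 < p.2 ∧ f p.2 < f p.1}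

/-- The affine rank matrix `r_f(i,j) = #{a ≤ i : f a ≥ j}`. -/
def rankMat (f : ℤ → ℤ) (i j : ℤ) : ℕ :=
  Set.ncard {a : ℤ | a ≤ i ∧ j ≤ f a}

/-- Affine Bruhat order via rank matrices. -/
def bruhatLE (f g : ℤ → ℤ) : Prop := ∀ i j : ℤ, rankMat f i j ≤ rankMat g i j

/-- The sum `Σ_{i=1}^m (f i − i)`. -/
def windowSum (m : ℕ) (f : ℤ → ℤ) : ℤ :=
  ∑ i ∈ Finset.range m, (f ((i:ℤ)+1) - ((i:ℤ)+1))

/-- The affine permutation `g_τ` associated to a matching `τ` of `[2n]`: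
on `[2n]`, `g_τ i = τ i` if `τ i > i` and `g_τ i = τ i + 2n` if `τ i < i`,
extended periodically. -/
def gTau (n : ℕ) (τ : Fin (2*n) → Fin (2*n)) (i : ℤ) : ℤ :=
  if h : (i % ((2*n : ℕ) : ℤ)).toNat < 2*n then
    let r : Fin (2*n) := ⟨(i % ((2*n : ℕ) : ℤ)).toNat, h⟩
    (i - i % ((2*n : ℕ) : ℤ)) +
      (if r < τ r then ((τ r : ℕ) : ℤ) else ((τ r : ℕ) : ℤ) + 2*n)
  else i

/-- `f_τ = g_τ − 1`. -/
def fTau (n : ℕ) (τ : Fin (2*n) → Fin (2*n)) (i : ℤ) : ℤ := gTau n τ i - 1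

/-- An electrical affine permutation for `n`. -/
def IsElectrical (n : ℕ) (f : ℤ → ℤ) : Prop :=
  IsAffinePerm (2*n) f ∧
  (∀ i : ℤ, i ≤ f i ∧ f i ≤ i + 2*n - 2) ∧
  windowSum (2*n) f = ((n:ℤ) - 1) * (2*n) ∧
  ∀ i : ℤ, (f (f i + 1) - (i - 1)) % ((2*n : ℕ) : ℤ) = 0

/-- The Grassmann necklace subset `I_a(f) ⊆ [m]`: representatives in `[m]` (0-based) of
`{f b mod m : b < a and f b ≥ a}`. -/
def necklaceI (m : ℕ) (f : ℤ → ℤ) (a : ℤ) : Finset (Fin m) :=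
  univ.filter fun x => ∃ b : ℤ, b < a ∧ a ≤ f b ∧ f b % (m:ℤ) = ((x:ℕ):ℤ)

/-- The dual necklace subset `J_a(f) ⊆ [m]`: representatives in `[m]` (0-based) of
`{b mod m : b < a and f b ≥ a}`. -/
def necklaceJ (m : ℕ) (f : ℤ → ℤ) (a : ℤ) : Finset (Fin m) :=
  univ.filter fun x => ∃ b : ℤ, b < a ∧ a ≤ f b ∧ b % (m:ℤ) = ((x:ℕ):ℤ)

/-- Dominance order on `k`-element subsets of `Fin m`:
the `r`-th smallest element of `I` is at most the `r`-th smallest element of `J`. -/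
def domLE {m : ℕ} (k : ℕ) (I J : Finset (Fin m)) : Prop :=
  ∃ (hI : I.card = k) (hJ : J.card = k),
    ∀ r : Fin k, I.orderEmbOfFin hI r ≤ J.orderEmbOfFin hJ r

/-- `a`-shifted dominance order: rotate so that `a` becomes least, then compare. -/
def sdomLE {m : ℕ} (k : ℕ) (a : Fin m) (I J : Finset (Fin m)) : Prop :=
  domLE k (I.image (· - a)) (J.image (· - a))

/-- `a`-shifted lexicographic order on subsets of `Fin m`. -/
def lexLE {m : ℕ} (a : Fin m) (I J : Finset (Fin m)) : Prop :=
  I = J ∨ List.Lex (· < ·) ((I.image (· - a)).sort (· ≤ ·)) ((J.image (· - a)).sort (· ≤ ·))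

/-- A Catalan subset of `[2n]` (0-based): an `(n−1)`-subset such that the length-`2n`
word with `U` at positions `{0} ∪ {x+1 : x ∈ I}` and `D` elsewhere is a Dyck path. -/
def IsCatalan {n : ℕ} (I : Finset (Fin (2*n))) : Prop :=
  I.card = n - 1 ∧
  ∀ p : ℕ, p ≤ 2*n →
    p ≤ 2 * ((insert 0 (I.image fun x => (x:ℕ)+1)).filter (· < p)).card

/-- Catalan subset with respect to the shifted order `≤_a`. -/
def IsCatalanAt {n : ℕ} (a : Fin (2*n)) (I : Finset (Fin (2*n))) : Prop :=
  IsCatalan (I.image (· - a))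

/-- The set of maxima of `S` with respect to the `a`-shifted order. -/
def maxAt {m : ℕ} (a : Fin m) (S : Finset (Fin m)) : Finset (Fin m) :=
  S.filter fun x => ∀ y ∈ S, y - a ≤ x - a

/-- `I_a(σ)` for a noncrossing partition `σ`: the complement in `[2n]` of the set of
`≤_a`-maxima of the blocks of `σ` (embedded by `bar`) and of the blocks of the dual
partition `σ̃` (embedded by `til`). -/
def IaP {n : ℕ} (σ : NCP n) (a : Fin (2*n)) : Finset (Fin (2*n)) :=
  univ \ ((σ.parts.biUnion fun B => maxAt a (B.image bar)) ∪
          ((univ : Finset (Fin n)).biUnion fun i =>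
            maxAt a ((univ.filter (dualRel σ i)).image til)))

/-- `I` is concordant with `σ`: `I` has `n−1` elements and every block of `σ` and of
its dual `σ̃` contains exactly one element of `[2n] ∖ I`. -/
def Concordant {n : ℕ} (σ : NCP n) (I : Finset (Fin (2*n))) : Prop :=
  I.card = n - 1 ∧
  (∀ B ∈ σ.parts, ((B.image bar) ∩ (univ \ I)).card = 1) ∧
  (∀ i : Fin n, (((univ.filter (dualRel σ i)).image til) ∩ (univ \ I)).card = 1)

/-- `E(I)`: the set of noncrossing partitions concordant with `I`. -/
def ESet {n : ℕ} (I : Finset (Fin (2*n))) : Set (NCP n) :=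
  {σ | IsNoncrossing σ ∧ Concordant σ I}

/-- The maximal minor `Δ_I(X)` on the columns indexed by `I`, in increasing order. -/
def minorOn {k m : ℕ} (X : Matrix (Fin k) (Fin m) ℝ) (I : Finset (Fin m)) : ℝ :=
  if h : I.card = k then (X.submatrix id fun r => I.orderEmbOfFin h r).det else 0

/-- `X` is totally nonnegative: it has full rank `k` and all maximal minors are `≥ 0`. -/
def IsTNN {k m : ℕ} (X : Matrix (Fin k) (Fin m) ℝ) : Prop :=
  X.rank = k ∧ ∀ I : Finset (Fin m), I.card = k → 0 ≤ minorOn X I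

/-- `t` times the matrix unit `E_{p,q}` (0-based indices). -/
def matE (m : ℕ) (p q : ℕ) (t : ℝ) : Matrix (Fin m) (Fin m) ℝ :=
  Matrix.of fun r s => if (r:ℕ) = p ∧ (s:ℕ) = q then t else 0

/-- `x_i(t) = Id + t·E_{i,i+1}` (1-based index `i`). -/
def xB (m i : ℕ) (t : ℝ) : Matrix (Fin m) (Fin m) ℝ := 1 + matE m (i-1) i t

/-- `y_i(t) = Id + t·E_{i+1,i}` (1-based index `i`). -/
def yB (m i : ℕ) (t : ℝ) : Matrix (Fin m) (Fin m) ℝ := 1 + matE m i (i-1) t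

/-- `u_i(t) = x_i(t)·y_{i−1}(t)` (1-based index `i`). -/
def uB (m i : ℕ) (t : ℝ) : Matrix (Fin m) (Fin m) ℝ := xB m i t * yB m (i-1) t

/-- The columns of `X`, extended `n`-periodically to all integer indices (0-based). -/
def colP {k n : ℕ} (X : Matrix (Fin k) (Fin n) ℝ) (i : ℤ) : Fin k → ℝ :=
  fun r => if h : (i % (n:ℤ)).toNat < n then X r ⟨(i % (n:ℤ)).toNat, h⟩ else 0

/-- `f_X(i) = min { j ≥ i : v_i ∈ span(v_{i+1}, …, v_j) }` (0-based columns). -/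
def fX {k n : ℕ} (X : Matrix (Fin k) (Fin n) ℝ) (i : ℤ) : ℤ :=
  sInf {j : ℤ | i ≤ j ∧ colP X i ∈ Submodule.span ℝ (colP X '' Set.Ioc i j)}

/-- Fintype instance for finite partitions of a finite set. -/
instance {α : Type*} [DecidableEq α] [Fintype α] (s : Finset α) : Fintype (Finpartition s) :=
  Fintype.ofInjective Finpartition.parts fun _ _ h => Finpartition.ext h

/-- The sorted list of (the values of) a subset of `Fin m`. -/
def sortedL {m : ℕ} (I : Finset (Fin m)) : List ℕ :=
  (I.sort (· ≤ ·)).map Fin.val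

/-- The number of inversions of a list (= the number of adjacent transpositions
needed to sort it, when entries are distinct). -/
def invNum (l : List ℕ) : ℕ :=
  ((Finset.range l.length ×ˢ Finset.range l.length).filter fun pq =>
    pq.1 < pq.2 ∧ l.getD pq.2 0 < l.getD pq.1 0).card

/-- The subset of `Fin m` whose values lie in the list `l`. -/
def toFinF {m : ℕ} (l : List ℕ) : Finset (Fin m) :=
  univ.filter fun x => (x:ℕ) ∈ l

/-- The double sum `Σ_{σ ∈ E(l), κ ∈ E(l')} L σ · L κ`, where `E` of a list with a
repeated entry (or an out-of-range entry) is empty. -/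
def pairSum {n : ℕ} (L : NCP n → ℝ) (l l' : List ℕ) : ℝ :=
  if (l.Nodup ∧ ∀ x ∈ l, x < 2*n) ∧ (l'.Nodup ∧ ∀ x ∈ l', x < 2*n) then
    ∑ᶠ σ ∈ ESet (n := n) (toFinF l), ∑ᶠ κ ∈ ESet (n := n) (toFinF l'), L σ * L κ
  else 0

/-- The list obtained from `LI` by replacing its entries at the positions in `S`
(in increasing order of position) by the first `#S` entries of `LJ`. -/
def swapI (LI LJ : List ℕ) (S : Finset ℕ) : List ℕ :=
  (List.range LI.length).map fun p =>
    if p ∈ S then LJ.getD ((S.filter (· < p)).card) 0 else LI.getD p 0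

/-- The list obtained from `LJ` by replacing its first `#S` entries by the entries of
`LI` at the positions in `S`, in increasing order. -/
def swapJ (LI LJ : List ℕ) (S : Finset ℕ) : List ℕ :=
  (List.range LJ.length).map fun p =>
    if p < S.card then LI.getD ((S.sort (· ≤ ·)).getD p 0) 0 else LJ.getD p 0

theorem stmt10 (n : ℕ) (hn : 0 < n) (f : ℤ → ℤ) (hf : IsElectrical n f)
    (i : ℤ) (h1 : i < f i) (h2 : f i < f (i+1)) :
    (∃ x ∈ necklaceI (2*n) f (i+1), ((x:ℕ):ℤ) = (i+1) % ((2*n:ℕ):ℤ)) ∧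
    (∃ x ∈ necklaceJ (2*n) f i, ((x:ℕ):ℤ) = (i-1) % ((2*n:ℕ):ℤ)) ∧
    f (i+1) < i + 2*n - 1 := by
  obtain ⟨⟨⟨finj, fsurj⟩, hper⟩, hbd, hsum, hcong⟩ := hf
  set N : ℤ := ((2*n : ℕ) : ℤ) with hNdef
  have hN : N = 2 * (n:ℤ) := by push_cast [hNdef]; ring
  have hn2 : 2 ≤ n := by
    by_contra h
    have hn1 : n = 1 := by omega
    have hb := hbd i
    rw [hn1] at hb
    push_cast at hb
    omega
  have hN4 : (4:ℤ) ≤ N := by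
    rw [hN]; have : (2:ℤ) ≤ (n:ℤ) := by exact_mod_cast hn2
    linarith
  have hNpos : (0:ℤ) < N := by linarith
  -- key lemma
  have key : f (f i + 1) = i + N - 1 := by
    have hc := hcong i
    obtain ⟨k, hk⟩ : N ∣ f (f i + 1) - (i - 1) := Int.dvd_of_emod_eq_zero hc
    have hb1 := hbd i
    have hb2 := hbd (f i + 1)
    have h3 : 3 ≤ N * k := by rw [← hk]; linarith [hb2.1]
    have h4 : N * k ≤ 2*N - 2 := by rw [← hk, hN]; linarith [hb2.2, hb1.2]
    have hk1 : 1 ≤ k := by nlinarith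
    have hk2 : k ≤ 1 := by nlinarith
    have : k = 1 := le_antisymm hk2 hk1
    rw [this, mul_one] at hk
    linarith
  -- Part 3
  have p3 : f (i+1) < i + 2*(n:ℤ) - 1 := by
    have hb3 := hbd (i+1)
    by_contra h
    push_neg at h
    have heq : f (i+1) = i + 2*(n:ℤ) - 1 := by linarith [hb3.2]
    have heq2 : f (i+1) = f (f i + 1) := by rw [heq, key, hN]
    have := finj heq2
    linarith
  -- f (i-1) ≥ i
  have p2 : i ≤ f (i-1) := by
    by_contra h
    push_neg at h
    have hbm := hbd (i-1)
    have hfe : f (i-1) = i - 1 := by linarith [hbm.1]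
    have hc := hcong (i-1)
    have hfi : f (i-1) + 1 = i := by linarith
    rw [hfi] at hc
    obtain ⟨k, hk⟩ : N ∣ f i - (i - 1 - 1) := Int.dvd_of_emod_eq_zero hc
    have hb1 := hbd i
    have h3 : 3 ≤ N * k := by rw [← hk]; linarith
    have h4 : N * k ≤ N := by rw [← hk, hN]; linarith [hb1.2]
    have hk1 : 1 ≤ k := by nlinarith
    have hk2 : k ≤ 1 := by nlinarith
    have hke : k = 1 := le_antisymm hk2 hk1
    rw [hke, mul_one] at hk
    -- f i = i + N - 2, but f (i+1) > f i and f (i+1) < i + N - 1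
    have h2' : f i + 1 ≤ f (i+1) := Int.add_one_le_iff.mpr h2
    rw [hN] at hk
    linarith
  refine ⟨?_, ?_, p3⟩
  · -- Part 1
    obtain ⟨b, hb⟩ := fsurj (i+1)
    have hble : b ≤ f b := (hbd b).1
    have hbne : b ≠ i + 1 := by
      intro hbe
      rw [hbe] at hb
      have h2' : f i + 1 ≤ f (i+1) := Int.add_one_le_iff.mpr h2
      linarith
    have hblt : b < i + 1 := by rw [hb] at hble; omega
    have hnn : 0 ≤ (i+1) % N := Int.emod_nonneg _ (by linarith)
    have hlt : (i+1) % N < N := Int.emod_lt_of_pos _ hNpos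
    have hltn : ((i+1) % N).toNat < 2*n := by omega
    refine ⟨⟨((i+1) % N).toNat, hltn⟩, ?_, ?_⟩
    · simp only [necklaceI, mem_filter, mem_univ, true_and]
      refine ⟨b, hblt, by rw [hb], ?_⟩
      rw [hb]
      simp [Int.toNat_of_nonneg hnn, ← hN]
    · simp [Int.toNat_of_nonneg hnn]
  · -- Part 2
    have hnn : 0 ≤ (i-1) % N := Int.emod_nonneg _ (by linarith)
    have hlt : (i-1) % N < N := Int.emod_lt_of_pos _ hNpos
    have hltn : ((i-1) % N).toNat < 2*n := by omega
    refine ⟨⟨((i-1) % N).toNat, hltn⟩, ?_, ?_⟩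
    · simp only [necklaceJ, mem_filter, mem_univ, true_and]
      refine ⟨i-1, by linarith, p2, ?_⟩
      simp [Int.toNat_of_nonneg hnn, ← hN]
    · simp [Int.toNat_of_nonneg hnn]

end
end

section
/- Let σ, κ be noncrossing partitions of [n]. Then: (a) σ is concordant with I_1(σ); (b) if σ is concordant with I_1(κ), then I_1(σ) ≤ I_1(κ) in dominance order, with equality only if σ = κ. Consequently, the square matrix over ℝ with rows and columns indexed by NC_n, whose (κ,σ)-entry is 1 if σ is concordant with I_1(κ) and 0 otherwise, is invertible. -/
open Finset

noncomputable section
open scoped Classical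

/-!
Place the blocks of `σ` on the points `ī` and the blocks of `σ̃` on the points `ĩ`. For
noncrossing `σ` these are `n + 1` pairwise disjoint blocks of `[2n]` (`#σ + #σ̃ = n + 1`, because
`i` fails to be the maximum of its `σ̃`-block exactly when `i + 1` opens a block of `σ`), and
`I₁(σ)` is the complement of the set of their maxima.

If `σ` is concordant with `I₁(κ)`, every block of `σ` or `σ̃` contains exactly one maximum of `κ`,
which lies at or below the block's own maximum. Distinct blocks give distinct points, so below
every threshold `κ` has at least as many maxima as `σ`; for the complements this is dominance.
The maxima of `σ` and `σ̃` determine `σ`: they give the closers and, by the remark above, the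
openers of the blocks of `σ`, and a noncrossing partition is rebuilt from those by scanning
from left to right. Hence the matrix is unitriangular with respect to the weight `∑ I₁(κ)`.
-/

section BlockMaxima
variable {α : Type*} {𝓑 : Finset (Finset α)}

lemma pairwiseDisjoint_image_image {β : Type*} [DecidableEq β] {f : α → β}
    (hf : Function.Injective f) (h𝓑 : (𝓑 : Set (Finset α)).PairwiseDisjoint id) :
    ((𝓑.image (image f) : Finset (Finset β)) : Set (Finset β)).PairwiseDisjoint id := by
  simp only [coe_image]
  rintro _ ⟨B, hB, rfl⟩ _ ⟨C, hC, rfl⟩ hBC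
  exact (disjoint_image hf).2 (h𝓑 hB hC fun h => hBC (h ▸ rfl))

variable [DecidableEq α]

lemma card_biUnion_of_card_eq_one (h𝓑 : (𝓑 : Set (Finset α)).PairwiseDisjoint id)
    {f : Finset α → Finset α} (hf : ∀ B ∈ 𝓑, f B ⊆ B ∧ #(f B) = 1) :
    #(𝓑.biUnion f) = #𝓑 := by
  rw [card_biUnion fun B hB C hC hBC => (h𝓑 hB hC hBC).mono (hf B hB).1 (hf C hC).1,
    sum_congr rfl fun B hB => (hf B hB).2, card_eq_sum_ones]

variable [LinearOrder α]

def blockMaxima (𝓑 : Finset (Finset α)) : Finset α :=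
  𝓑.biUnion fun B => B.filter fun x => ∀ y ∈ B, y ≤ x

lemma mem_blockMaxima {x : α} : x ∈ blockMaxima 𝓑 ↔ ∃ B ∈ 𝓑, x ∈ B ∧ ∀ y ∈ B, y ≤ x := by
  simp [blockMaxima]

omit [DecidableEq α] in
lemma filter_forall_le_eq_singleton_max' {B : Finset α} (hB : B.Nonempty) :
    B.filter (fun x => ∀ y ∈ B, y ≤ x) = {B.max' hB} := by
  ext x
  simp only [mem_filter, mem_singleton]
  exact ⟨fun ⟨hx, hmax⟩ => le_antisymm (B.le_max' x hx) (hmax _ (B.max'_mem hB)),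
    fun h => h ▸ ⟨B.max'_mem hB, fun y hy => B.le_max' y hy⟩⟩

lemma card_blockMaxima (h𝓑 : (𝓑 : Set (Finset α)).PairwiseDisjoint id)
    (hne : ∀ B ∈ 𝓑, B.Nonempty) : #(blockMaxima 𝓑) = #𝓑 :=
  card_biUnion_of_card_eq_one h𝓑 fun B hB =>
    ⟨filter_subset _ _, by rw [filter_forall_le_eq_singleton_max' (hne B hB), card_singleton]⟩

lemma inter_blockMaxima (h𝓑 : (𝓑 : Set (Finset α)).PairwiseDisjoint id) {B : Finset α}
    (hB : B ∈ 𝓑) (hne : B.Nonempty) : B ∩ blockMaxima 𝓑 = {B.max' hne} := by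
  rw [← filter_forall_le_eq_singleton_max' hne]
  ext x
  simp only [mem_inter, mem_filter, mem_blockMaxima]
  constructor
  · rintro ⟨hx, C, hC, hxC, hmax⟩
    obtain rfl : B = C := h𝓑.elim_finset hB hC x hx hxC
    exact ⟨hx, hmax⟩
  · exact fun ⟨hx, hmax⟩ => ⟨hx, B, hB, hx, hmax⟩

/-- Each block whose maximum lies below `t` contributes its own point of `T`. -/
lemma card_filter_blockMaxima_le (h𝓑 : (𝓑 : Set (Finset α)).PairwiseDisjoint id)
    {T : Finset α} (hT : ∀ B ∈ 𝓑, #(B ∩ T) = 1) (t : α) :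
    #((blockMaxima 𝓑).filter (· ≤ t)) ≤ #(T.filter (· ≤ t)) := by
  set 𝓑t := 𝓑.filter fun B => ∀ x ∈ B, x ≤ t
  have h𝓑t : (𝓑t : Set (Finset α)).PairwiseDisjoint id :=
    h𝓑.subset (coe_subset.2 (filter_subset _ _))
  calc #((blockMaxima 𝓑).filter (· ≤ t)) ≤ #(blockMaxima 𝓑t) := by
        refine card_le_card fun x hx => ?_
        simp only [mem_filter, mem_blockMaxima] at hx ⊢
        obtain ⟨⟨B, hB, hxB, hmax⟩, hxt⟩ := hx
        exact ⟨B, mem_filter.2 ⟨hB, fun y hy => (hmax y hy).trans hxt⟩, hxB, hmax⟩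
    _ = #𝓑t := card_blockMaxima h𝓑t fun B hB =>
        (card_pos.1 (by rw [hT B (mem_filter.1 hB).1]; exact one_pos)).mono inter_subset_left
    _ = #(𝓑t.biUnion (· ∩ T)) :=
        (card_biUnion_of_card_eq_one h𝓑t fun B hB =>
          ⟨inter_subset_left, hT B (mem_filter.1 hB).1⟩).symm
    _ ≤ #(T.filter (· ≤ t)) := by
        refine card_le_card fun x hx => ?_
        simp only [mem_biUnion, mem_inter, mem_filter, 𝓑t] at hx ⊢
        obtain ⟨B, ⟨-, hBt⟩, hxB, hxT⟩ := hx
        exact ⟨hxT, hBt x hxB⟩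

lemma blockMaxima_union (𝓑 𝓒 : Finset (Finset α)) :
    blockMaxima (𝓑 ∪ 𝓒) = blockMaxima 𝓑 ∪ blockMaxima 𝓒 :=
  union_biUnion

lemma apply_mem_blockMaxima_image_iff {β : Type*} [LinearOrder β] [DecidableEq β] {f : α → β}
    (hf : StrictMono f) {x : α} :
    f x ∈ blockMaxima (𝓑.image (image f)) ↔ x ∈ blockMaxima 𝓑 := by
  simp [mem_blockMaxima, hf.injective.eq_iff, hf.le_iff_le]

end BlockMaxima

section Dominance
variable {m k : ℕ}

lemma domLE_of_card_filter_le {I J : Finset (Fin m)} (hI : #I = k) (hJ : #J = k)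
    (h : ∀ t, #(J.filter (· ≤ t)) ≤ #(I.filter (· ≤ t))) : domLE k I J := by
  refine ⟨hI, hJ, fun r => le_of_not_gt fun hlt => ?_⟩
  set t := J.orderEmbOfFin hJ r
  have hIt : #(I.filter (· ≤ t)) ≤ r := by
    calc #(I.filter (· ≤ t)) ≤ #((Iio r).image (I.orderEmbOfFin hI)) := by
          refine card_le_card fun x hx => ?_
          obtain ⟨hxI, hxt⟩ := mem_filter.1 hx
          obtain ⟨s, rfl⟩ : x ∈ Set.range (I.orderEmbOfFin hI) := by
            rw [range_orderEmbOfFin]; exact hxI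
          exact mem_image_of_mem _ (mem_Iio.2 ((I.orderEmbOfFin hI).lt_iff_lt.1 (hxt.trans_lt hlt)))
      _ ≤ #(Iio r) := card_image_le
      _ = r := Fin.card_Iio r
  have hJt : r + 1 ≤ #(J.filter (· ≤ t)) := by
    calc r + 1 = #((Iic r).image (J.orderEmbOfFin hJ)) := by
          rw [card_image_of_injective _ (J.orderEmbOfFin hJ).injective, Fin.card_Iic]
      _ ≤ #(J.filter (· ≤ t)) := by
          refine card_le_card fun x hx => ?_
          obtain ⟨s, hs, rfl⟩ := mem_image.1 hx
          exact mem_filter.2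
            ⟨orderEmbOfFin_mem J hJ s, (J.orderEmbOfFin hJ).monotone (mem_Iic.1 hs)⟩
  have := h t
  omega

lemma domLE_compl_of_card_filter_le {S T : Finset (Fin m)} (hS : #Sᶜ = k) (hT : #Tᶜ = k)
    (h : ∀ t, #(S.filter (· ≤ t)) ≤ #(T.filter (· ≤ t))) : domLE k Sᶜ Tᶜ := by
  refine domLE_of_card_filter_le hS hT fun t => ?_
  have hsplit (X : Finset (Fin m)) :
      #(X.filter (· ≤ t)) + #(Xᶜ.filter (· ≤ t)) = #(univ.filter (· ≤ t)) := by
    rw [← card_union_of_disjoint (disjoint_filter_filter disjoint_compl_right), ← filter_union,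
      union_compl]
  have := h t
  have := hsplit S
  have := hsplit T
  omega

lemma sum_val_lt_sum_val_of_domLE {I J : Finset (Fin m)} (h : domLE k I J) (hne : I ≠ J) :
    ∑ x ∈ I, (x : ℕ) < ∑ x ∈ J, (x : ℕ) := by
  obtain ⟨hI, hJ, hle⟩ := h
  rw [← map_orderEmbOfFin_univ I hI, ← map_orderEmbOfFin_univ J hJ, sum_map, sum_map]
  refine sum_lt_sum (fun r _ => hle r) ?_
  by_contra! hge
  refine hne ?_
  rw [← image_orderEmbOfFin_univ I hI, ← image_orderEmbOfFin_univ J hJ]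
  exact image_congr fun r _ => le_antisymm (hle r) (Fin.le_def.2 (hge r (mem_univ r)))

end Dominance

lemma Matrix.isUnit_of_unitriangular {ι R β : Type*} [Fintype ι] [DecidableEq ι] [CommRing R]
    [LinearOrder β] {A : Matrix ι ι R} (w : ι → β) (hdiag : ∀ i, A i i = 1)
    (htri : ∀ i j, i ≠ j → A i j ≠ 0 → w i < w j) : IsUnit A := by
  have hA : A.BlockTriangular w := fun i j hji => by
    by_contra h
    obtain rfl | hij := eq_or_ne i j
    · exact lt_irrefl _ hji
    · exact lt_asymm hji (htri i j hij h)
  have hblock (b : β) : A.toSquareBlock w b = 1 := by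
    ext ⟨i, hi⟩ ⟨j, hj⟩
    obtain rfl | hij := eq_or_ne i j
    · simp [Matrix.toSquareBlock_def, hdiag]
    · have : A i j = 0 := by_contra fun h => (htri i j hij h).ne (hi.trans hj.symm)
      simp [Matrix.toSquareBlock_def, hij, this]
  rw [Matrix.isUnit_iff_isUnit_det, hA.det, prod_eq_one fun b _ => by rw [hblock, Matrix.det_one]]
  exact isUnit_one

section DualPartition

def IsUnionOfParts {α : Type*} [DecidableEq α] {s : Finset α} (P : Finpartition s)
    (S : Finset α) : Prop :=
  ∀ B ∈ P.parts, B ⊆ S ∨ Disjoint B S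

namespace IsUnionOfParts
variable {α : Type*} [DecidableEq α] {s : Finset α} {P : Finpartition s} {S T : Finset α}

lemma union (hS : IsUnionOfParts P S) (hT : IsUnionOfParts P T) :
    IsUnionOfParts P (S ∪ T) := fun B hB => by
  rcases hS B hB with h | h
  · exact Or.inl (h.trans subset_union_left)
  rcases hT B hB with h' | h'
  · exact Or.inl (h'.trans subset_union_right)
  · exact Or.inr (disjoint_union_right.2 ⟨h, h'⟩)

lemma inter (hS : IsUnionOfParts P S) (hT : IsUnionOfParts P T) :
    IsUnionOfParts P (S ∩ T) := fun B hB => by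
  rcases hS B hB with h | h
  · rcases hT B hB with h' | h'
    · exact Or.inl (subset_inter h h')
    · exact Or.inr (h'.mono_right inter_subset_right)
  · exact Or.inr (h.mono_right inter_subset_left)

end IsUnionOfParts

variable {m n : ℕ}

lemma cIoc_swap {a b : Fin m} (hab : a ≠ b) : cIoc b a = (cIoc a b)ᶜ := by
  have := Fin.val_ne_of_ne hab
  ext x
  simp only [cIoc, mem_filter, mem_univ, true_and, mem_compl, Fin.lt_def, Fin.le_def]
  split_ifs <;> omega

lemma mem_cIoc_of_lt {a b x : Fin m} (hab : a < b) : x ∈ cIoc a b ↔ a < x ∧ x ≤ b := by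
  simp [cIoc, hab]

lemma cIoc_eq_union_or_eq_inter {i j k : Fin m} (hij : i ≠ j) (hjk : j ≠ k) (hik : i ≠ k) :
    cIoc i k = cIoc i j ∪ cIoc j k ∨ cIoc i k = cIoc i j ∩ cIoc j k := by
  have := Fin.val_ne_of_ne hij
  have := Fin.val_ne_of_ne hjk
  have := Fin.val_ne_of_ne hik
  by_cases h : j ∈ cIoc i k <;> [left; right] <;> ext x <;>
    simp only [cIoc, mem_filter, mem_univ, true_and, mem_union, mem_inter, Fin.lt_def,
      Fin.le_def] at h ⊢ <;> split_ifs at h ⊢ <;> omega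

lemma dualRel_iff_isUnionOfParts {σ : NCP n} {i j : Fin n} (hij : i ≠ j) :
    dualRel σ i j ↔ IsUnionOfParts σ (cIoc i j) := by
  simp only [dualRel, hij, false_or, not_exists, not_and, IsUnionOfParts, cIoc_swap hij,
    ← sdiff_eq_inter_compl, sdiff_nonempty, ← not_disjoint_iff_nonempty_inter]
  exact forall₂_congr fun B _ => by tauto

lemma dualRel_equivalence (σ : NCP n) : Equivalence (dualRel σ) where
  refl _ := Or.inl rfl
  symm {i j} := by
    rintro (rfl | h)
    · exact Or.inl rfl
    · exact Or.inr fun ⟨B, hB, h1, h2⟩ => h ⟨B, hB, h2, h1⟩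
  trans {i j k} hij hjk := by
    obtain rfl | hij' := eq_or_ne i j; · exact hjk
    obtain rfl | hjk' := eq_or_ne j k; · exact hij
    obtain rfl | hik' := eq_or_ne i k; · exact Or.inl rfl
    rw [dualRel_iff_isUnionOfParts hij'] at hij
    rw [dualRel_iff_isUnionOfParts hjk'] at hjk
    rw [dualRel_iff_isUnionOfParts hik']
    rcases cIoc_eq_union_or_eq_inter hij' hjk' hik' with h | h <;> rw [h]
    exacts [hij.union hjk, hij.inter hjk]

def dualPartition (σ : NCP n) : NCP n :=
  Finpartition.ofSetoid ⟨dualRel σ, dualRel_equivalence σ⟩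

lemma mem_part_dualPartition {σ : NCP n} {i j : Fin n} :
    j ∈ (dualPartition σ).part i ↔ dualRel σ i j :=
  Finpartition.mem_part_ofSetoid_iff_rel

lemma dualPartition_parts (σ : NCP n) :
    (dualPartition σ).parts = univ.image fun i => univ.filter (dualRel σ i) := rfl

end DualPartition

section Extremes
variable {α : Type*} [LinearOrder α] [Fintype α] [DecidableEq α]

def IsBlockMax (P : Finpartition (univ : Finset α)) (x : α) : Prop := ∀ y ∈ P.part x, y ≤ x

def IsBlockMin (P : Finpartition (univ : Finset α)) (x : α) : Prop := ∀ y ∈ P.part x, x ≤ y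

variable (P : Finpartition (univ : Finset α))

lemma mem_blockMaxima_parts {x : α} : x ∈ blockMaxima P.parts ↔ IsBlockMax P x := by
  rw [mem_blockMaxima]
  constructor
  · rintro ⟨B, hB, hxB, hmax⟩
    rwa [IsBlockMax, P.part_eq_of_mem hB hxB]
  · exact fun h => ⟨P.part x, P.part_mem.2 (mem_univ x), P.mem_part (mem_univ x), h⟩

lemma card_filter_isBlockMax : #(univ.filter (IsBlockMax P)) = #P.parts := by
  rw [← card_blockMaxima P.disjoint fun B => P.nonempty_of_mem_parts]
  congr 1
  ext x
  rw [mem_filter, mem_blockMaxima_parts, and_iff_right (mem_univ x)]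

lemma card_filter_isBlockMin : #(univ.filter (IsBlockMin P)) = #P.parts := by
  refine card_bij (fun x _ => P.part x) (fun x _ => P.part_mem.2 (mem_univ x)) ?_ ?_
  · intro x hx y hy hxy
    simp only [mem_filter, mem_univ, true_and] at hx hy
    exact le_antisymm (hx y (hxy ▸ P.mem_part (mem_univ y)))
      (hy x (hxy ▸ P.mem_part (mem_univ x)))
  · intro B hB
    have hne := P.nonempty_of_mem_parts hB
    refine ⟨B.min' hne, mem_filter.2 ⟨mem_univ _, fun y hy => ?_⟩,
      P.part_eq_of_mem hB (B.min'_mem hne)⟩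
    rw [P.part_eq_of_mem hB (B.min'_mem hne)] at hy
    exact B.min'_le y hy

end Extremes

section Reconstruction
variable {α : Type*} [Fintype α] [DecidableEq α] (P : Finpartition (univ : Finset α))

lemma Finpartition.parts_eq_image_part : P.parts = univ.image P.part := by
  ext B
  simp only [mem_image, mem_univ, true_and]
  constructor
  · intro hB
    obtain ⟨x, hx⟩ := P.nonempty_of_mem_parts hB
    exact ⟨x, P.part_eq_of_mem hB hx⟩
  · rintro ⟨x, rfl⟩
    exact P.part_mem.2 (mem_univ x)

variable [LinearOrder α]

def blockMin (x : α) : α := (P.part x).min' ⟨x, P.mem_part (mem_univ x)⟩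

variable {P}

lemma blockMin_mem (x : α) : blockMin P x ∈ P.part x := min'_mem _ _

lemma blockMin_le {x y : α} (hy : y ∈ P.part x) : blockMin P x ≤ y := min'_le _ _ hy

lemma part_blockMin (x : α) : P.part (blockMin P x) = P.part x :=
  P.part_eq_of_mem (P.part_mem.2 (mem_univ x)) (blockMin_mem x)

lemma part_eq_part_iff_blockMin_eq {x y : α} :
    P.part x = P.part y ↔ blockMin P x = blockMin P y := by
  refine ⟨fun h => by simp only [blockMin, h], fun h => ?_⟩
  rw [← part_blockMin x, h, part_blockMin]

lemma isBlockMin_iff_blockMin_eq {x : α} : IsBlockMin P x ↔ blockMin P x = x :=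
  ⟨fun h => le_antisymm (blockMin_le (P.mem_part (mem_univ x))) (h _ (blockMin_mem x)),
    fun h _ hy => h ▸ blockMin_le hy⟩

lemma Finpartition.eq_of_blockMin_eq {Q : Finpartition (univ : Finset α)}
    (h : ∀ x, blockMin P x = blockMin Q x) : P = Q := by
  have hpart (x : α) : P.part x = Q.part x := by
    ext y
    rw [P.mem_part_iff_part_eq_part (mem_univ y) (mem_univ x),
      Q.mem_part_iff_part_eq_part (mem_univ y) (mem_univ x), part_eq_part_iff_blockMin_eq,
      part_eq_part_iff_blockMin_eq, h, h]
  exact Finpartition.ext (by rw [P.parts_eq_image_part, Q.parts_eq_image_part, funext hpart])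

end Reconstruction

section Blocks
variable {n : ℕ}

lemma bar_strictMono : StrictMono (bar : Fin n → Fin (2 * n)) := fun a b h => by
  simp only [bar, Fin.lt_def] at h ⊢; omega

lemma til_strictMono : StrictMono (til : Fin n → Fin (2 * n)) := fun a b h => by
  simp only [til, Fin.lt_def] at h ⊢; omega

lemma bar_ne_til (a b : Fin n) : bar a ≠ til b := fun h => by
  have := congrArg Fin.val h
  simp only [bar, til] at this
  omega

def blocks (σ : NCP n) : Finset (Finset (Fin (2 * n))) :=
  σ.parts.image (image bar) ∪ (dualPartition σ).parts.image (image til)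

lemma maxAt_eq_filter {m : ℕ} {z : Fin m} (hz : (z : ℕ) = 0) (S : Finset (Fin m)) :
    maxAt z S = S.filter fun x => ∀ y ∈ S, y ≤ x := by
  obtain ⟨m, rfl⟩ := Nat.exists_eq_add_one.2 z.pos
  obtain rfl : z = 0 := Fin.ext hz
  simp only [maxAt, sub_zero]

lemma IaP_eq_compl_blockMaxima (σ : NCP n) {z : Fin (2 * n)} (hz : (z : ℕ) = 0) :
    IaP σ z = (blockMaxima (blocks σ))ᶜ := by
  rw [IaP, compl_eq_univ_sdiff]
  congr 1
  ext x
  simp [blocks, mem_blockMaxima, maxAt_eq_filter hz, dualPartition_parts, or_and_right, exists_or]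

lemma concordant_iff {σ : NCP n} {I : Finset (Fin (2 * n))} :
    Concordant σ I ↔ #I = n - 1 ∧ ∀ B ∈ blocks σ, #(B ∩ Iᶜ) = 1 := by
  simp only [Concordant, blocks, dualPartition_parts, forall_mem_union, forall_mem_image,
    compl_eq_univ_sdiff, mem_univ, true_imp_iff]

lemma disjoint_image_bar_image_til (B C : Finset (Fin n)) :
    Disjoint (B.image bar) (C.image til) := by
  simp only [disjoint_left, mem_image]
  rintro _ ⟨b, -, rfl⟩ ⟨c, -, hc⟩
  exact bar_ne_til b c hc.symm

lemma pairwiseDisjoint_blocks (σ : NCP n) :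
    (blocks σ : Set (Finset (Fin (2 * n)))).PairwiseDisjoint id := by
  rw [blocks, coe_union, Set.pairwiseDisjoint_union]
  refine ⟨pairwiseDisjoint_image_image bar_strictMono.injective σ.disjoint,
    pairwiseDisjoint_image_image til_strictMono.injective (dualPartition σ).disjoint, ?_⟩
  simp only [coe_image, Set.mem_image, mem_coe]
  rintro _ ⟨B, -, rfl⟩ _ ⟨C, -, rfl⟩ -
  exact disjoint_image_bar_image_til B C

lemma nonempty_of_mem_blocks {σ : NCP n} {B : Finset (Fin (2 * n))} (hB : B ∈ blocks σ) :
    B.Nonempty := by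
  simp only [blocks, mem_union, mem_image] at hB
  rcases hB with ⟨C, hC, rfl⟩ | ⟨C, hC, rfl⟩
  exacts [(σ.nonempty_of_mem_parts hC).image _,
    ((dualPartition σ).nonempty_of_mem_parts hC).image _]

lemma card_blocks (σ : NCP n) : #(blocks σ) = #σ.parts + #(dualPartition σ).parts := by
  rw [blocks, card_union_of_disjoint,
    card_image_of_injective _ (image_injective bar_strictMono.injective),
    card_image_of_injective _ (image_injective til_strictMono.injective)]
  simp only [disjoint_left, mem_image]
  rintro _ ⟨B, hB, rfl⟩ ⟨C, hC, hCB⟩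
  obtain ⟨x, hx⟩ := (σ.nonempty_of_mem_parts hB).image bar
  exact disjoint_left.1 (disjoint_image_bar_image_til B C) hx (hCB ▸ hx)

lemma bar_mem_blockMaxima_blocks {σ : NCP n} {x : Fin n} :
    bar x ∈ blockMaxima (blocks σ) ↔ IsBlockMax σ x := by
  rw [blocks, blockMaxima_union, mem_union, apply_mem_blockMaxima_image_iff bar_strictMono,
    mem_blockMaxima_parts, or_iff_left]
  simp [mem_blockMaxima, (bar_ne_til _ _).symm]

lemma til_mem_blockMaxima_blocks {σ : NCP n} {x : Fin n} :
    til x ∈ blockMaxima (blocks σ) ↔ IsBlockMax (dualPartition σ) x := by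
  rw [blocks, blockMaxima_union, mem_union, apply_mem_blockMaxima_image_iff til_strictMono,
    mem_blockMaxima_parts, or_iff_right]
  simp [mem_blockMaxima, bar_ne_til]

end Blocks

section Noncrossing
variable {n : ℕ}

lemma IsNoncrossing.eq_of_lt_of_lt_of_lt {σ : NCP n} (hσ : IsNoncrossing σ)
    {B C : Finset (Fin n)} (hB : B ∈ σ.parts) (hC : C ∈ σ.parts) {a b c d : Fin n}
    (hab : a < b) (hbc : b < c) (hcd : c < d) (ha : a ∈ B) (hc : c ∈ B) (hb : b ∈ C)
    (hd : d ∈ C) : B = C := by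
  obtain ⟨D, hD, haD, hbD⟩ := hσ a b c d hab hbc hcd ⟨B, hB, ha, hc⟩ ⟨C, hC, hb, hd⟩
  rw [σ.eq_of_mem_parts hB hD ha haD, σ.eq_of_mem_parts hC hD hb hbD]

lemma isBlockMax_last {m : ℕ} (P : NCP (m + 1)) : IsBlockMax P (Fin.last m) :=
  fun y _ => Fin.le_last y

lemma isBlockMin_zero {m : ℕ} (P : NCP (m + 1)) : IsBlockMin P 0 :=
  fun y _ => Fin.zero_le y

variable {m : ℕ} {σ : NCP (m + 1)} {k : Fin m}

lemma isBlockMin_succ_of_dualRel {j : Fin (m + 1)} (hj : k.castSucc < j)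
    (hrel : dualRel σ k.castSucc j) : IsBlockMin σ k.succ := by
  have hk : k.succ ∈ cIoc k.castSucc j := by
    rw [mem_cIoc_of_lt hj]
    simp only [Fin.lt_def, Fin.le_def, Fin.val_castSucc, Fin.val_succ] at hj ⊢
    omega
  have hsub : σ.part k.succ ⊆ cIoc k.castSucc j := by
    refine ((dualRel_iff_isUnionOfParts hj.ne).1 hrel _ (σ.part_mem.2 (mem_univ _))).resolve_right
      (not_disjoint_iff.2 ⟨k.succ, σ.mem_part (mem_univ _), hk⟩)
  intro y hy
  have := ((mem_cIoc_of_lt hj).1 (hsub hy)).1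
  simp only [Fin.lt_def, Fin.le_def, Fin.val_castSucc, Fin.val_succ] at this ⊢
  omega

/-- The arc `{k + 1, …, max B}` spanned by the block `B` opened at `k + 1` is a union of blocks:
a block leaving it would cross `B`. -/
lemma dualRel_castSucc_max'_of_isBlockMin (hσ : IsNoncrossing σ) (hmin : IsBlockMin σ k.succ) :
    dualRel σ k.castSucc ((σ.part k.succ).max' ⟨k.succ, σ.mem_part (mem_univ _)⟩) := by
  set B := σ.part k.succ
  have hB : B ∈ σ.parts := σ.part_mem.2 (mem_univ _)
  have hkB : k.succ ∈ B := σ.mem_part (mem_univ _)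
  set j := B.max' ⟨k.succ, hkB⟩
  have hjB : j ∈ B := B.max'_mem _
  have hkj : k.succ ≤ j := B.le_max' _ hkB
  have hlt : k.castSucc < j := Fin.castSucc_lt_succ.trans_le hkj
  rw [dualRel_iff_isUnionOfParts hlt.ne]
  intro C hC
  by_contra! h
  obtain ⟨hCS, hCS'⟩ := h
  obtain ⟨y, hyC, hyS⟩ := not_subset.1 hCS
  obtain ⟨x, hxC, hxS⟩ := not_disjoint_iff.1 hCS'
  rw [mem_cIoc_of_lt hlt] at hxS hyS
  have hCB : C ≠ B := by
    rintro rfl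
    exact hyS ⟨Fin.castSucc_lt_succ.trans_le (hmin y hyC), B.le_max' y hyC⟩
  have hxk : k.succ < x := by
    refine lt_of_le_of_ne ?_ fun h => hCB (σ.eq_of_mem_parts hC hB hxC (h ▸ hkB))
    simpa [Fin.lt_def, Fin.le_def] using hxS.1
  have hxj : x < j := lt_of_le_of_ne hxS.2 fun h => hCB (σ.eq_of_mem_parts hC hB hxC (h ▸ hjB))
  rcases le_or_gt y k.castSucc with hy | hy
  · exact hCB (hσ.eq_of_lt_of_lt_of_lt hC hB
      (hy.trans_lt Fin.castSucc_lt_succ) hxk hxj hyC hxC hkB hjB)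
  · have hjy : j < y := lt_of_not_ge fun h => hyS ⟨hy, h⟩
    exact hCB (hσ.eq_of_lt_of_lt_of_lt hB hC hxk hxj hjy hkB hjB hxC hyC).symm

lemma isBlockMax_dualPartition_castSucc_iff (hσ : IsNoncrossing σ) :
    IsBlockMax (dualPartition σ) k.castSucc ↔ ¬ IsBlockMin σ k.succ := by
  simp only [IsBlockMax, mem_part_dualPartition]
  constructor
  · intro hmax hmin
    exact (hmax _ (dualRel_castSucc_max'_of_isBlockMin hσ hmin)).not_gt
      (Fin.castSucc_lt_succ.trans_le ((σ.part k.succ).le_max' _ (σ.mem_part (mem_univ _))))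
  · exact fun hmin j hj => le_of_not_gt fun hlt => hmin (isBlockMin_succ_of_dualRel hlt hj)

end Noncrossing

section Counting
variable {n : ℕ}

lemma card_parts_add_card_parts_dualPartition {σ : NCP n} (hn : 0 < n) (hσ : IsNoncrossing σ) :
    #σ.parts + #(dualPartition σ).parts = n + 1 := by
  obtain ⟨m, rfl⟩ := Nat.exists_eq_add_one.2 hn
  have hmax : #(univ.filter (IsBlockMax (dualPartition σ))) =
      #(univ.filter fun k : Fin m => ¬ IsBlockMin σ k.succ) + 1 := by
    simp only [card_filter, Fin.sum_univ_castSucc, isBlockMax_dualPartition_castSucc_iff hσ,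
      isBlockMax_last, if_true]
  have hmin : #(univ.filter (IsBlockMin σ)) =
      1 + #(univ.filter fun k : Fin m => IsBlockMin σ k.succ) := by
    simp only [card_filter, Fin.sum_univ_succ, isBlockMin_zero, if_true]
  have hsplit := card_filter_add_card_filter_not (s := (univ : Finset (Fin m)))
    fun k => IsBlockMin σ k.succ
  rw [card_filter_isBlockMax] at hmax
  rw [card_filter_isBlockMin] at hmin
  rw [card_univ, Fintype.card_fin] at hsplit
  omega

lemma card_blockMaxima_blocks {σ : NCP n} (hn : 0 < n) (hσ : IsNoncrossing σ) :
    #(blockMaxima (blocks σ)) = n + 1 := by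
  rw [card_blockMaxima (pairwiseDisjoint_blocks σ) fun B => nonempty_of_mem_blocks, card_blocks,
    card_parts_add_card_parts_dualPartition hn hσ]

end Counting

section Uniqueness
variable {n : ℕ} {σ κ : NCP n}

/-- Scanning `[n]` from left to right, an element `z` that does not open a block joins the most
recently opened block that has not been closed before `z`. -/
lemma isGreatest_blockMin (hσ : IsNoncrossing σ) {z : Fin n} (hz : ¬ IsBlockMin σ z) :
    IsGreatest {a | a < z ∧ IsBlockMin σ a ∧ ∀ c < z, IsBlockMax σ c → blockMin σ c ≠ a}
      (blockMin σ z) := by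
  have hzz : z ∈ σ.part z := σ.mem_part (mem_univ z)
  refine ⟨⟨lt_of_le_of_ne (blockMin_le hzz) fun h => hz (isBlockMin_iff_blockMin_eq.2 h),
    fun y hy => blockMin_le (part_blockMin z ▸ hy), fun c hcz hc hcm => ?_⟩, ?_⟩
  · have : z ∈ σ.part c := by rw [part_eq_part_iff_blockMin_eq.2 hcm]; exact hzz
    exact hcz.not_ge (hc z this)
  · rintro a ⟨haz, hmin, hopen⟩
    by_contra! hlt
    have hne : σ.part a ≠ σ.part z := fun h => hlt.ne' <| by
      rw [← isBlockMin_iff_blockMin_eq.1 hmin, part_eq_part_iff_blockMin_eq.1 h]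
    have haa : a ∈ σ.part a := σ.mem_part (mem_univ a)
    set e := (σ.part a).max' ⟨a, haa⟩
    have heA : e ∈ σ.part a := max'_mem _ _
    have hpe : σ.part e = σ.part a := σ.part_eq_of_mem (σ.part_mem.2 (mem_univ a)) heA
    have hze : z < e := by
      refine lt_of_not_ge fun hez => ?_
      rcases hez.lt_or_eq with hez | rfl
      · refine hopen e hez (fun y hy => (σ.part a).le_max' y (hpe ▸ hy)) ?_
        rw [← isBlockMin_iff_blockMin_eq.1 hmin]
        exact part_eq_part_iff_blockMin_eq.1 hpe
      · exact hne hpe.symm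
    exact hne (hσ.eq_of_lt_of_lt_of_lt (σ.part_mem.2 (mem_univ z)) (σ.part_mem.2 (mem_univ a))
      hlt haz hze (blockMin_mem z) hzz haa heA).symm

lemma eq_of_isBlockMax_iff_of_isBlockMin_iff (hσ : IsNoncrossing σ) (hκ : IsNoncrossing κ)
    (hmax : ∀ x, IsBlockMax σ x ↔ IsBlockMax κ x) (hmin : ∀ x, IsBlockMin σ x ↔ IsBlockMin κ x) :
    σ = κ := by
  refine Finpartition.eq_of_blockMin_eq fun z => ?_
  induction z using WellFoundedLT.induction with
  | _ z ih =>
    by_cases hz : IsBlockMin σ z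
    · rw [isBlockMin_iff_blockMin_eq.1 hz, isBlockMin_iff_blockMin_eq.1 ((hmin z).1 hz)]
    · have hopen : {a | a < z ∧ IsBlockMin σ a ∧ ∀ c < z, IsBlockMax σ c → blockMin σ c ≠ a} =
          {a | a < z ∧ IsBlockMin κ a ∧ ∀ c < z, IsBlockMax κ c → blockMin κ c ≠ a} := by
        ext a
        exact and_congr_right fun _ => and_congr (hmin a)
          (forall₂_congr fun c hc => by rw [hmax c, ih c hc])
      refine (isGreatest_blockMin hσ hz).unique ?_
      rw [hopen]
      exact isGreatest_blockMin hκ (mt (hmin z).2 hz)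

end Uniqueness

section Necklace
variable {n : ℕ} {σ κ : NCP n}

lemma isBlockMin_iff_of_isBlockMax_dualPartition_iff (hσ : IsNoncrossing σ)
    (hκ : IsNoncrossing κ)
    (h : ∀ i, IsBlockMax (dualPartition σ) i ↔ IsBlockMax (dualPartition κ) i) (x : Fin n) :
    IsBlockMin σ x ↔ IsBlockMin κ x := by
  obtain ⟨m, rfl⟩ := Nat.exists_eq_add_one.2 x.pos
  cases x using Fin.cases with
  | zero => exact iff_of_true (isBlockMin_zero σ) (isBlockMin_zero κ)
  | succ k =>
    rw [← not_iff_not, ← isBlockMax_dualPartition_castSucc_iff hσ,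
      ← isBlockMax_dualPartition_castSucc_iff hκ]
    exact h _

variable {z : Fin (2 * n)} (hz : (z : ℕ) = 0)
include hz

lemma card_IaP (hσ : IsNoncrossing σ) : #(IaP σ z) = n - 1 := by
  have hn : 0 < n := by have := z.pos; omega
  rw [IaP_eq_compl_blockMaxima σ hz, card_compl, Fintype.card_fin,
    card_blockMaxima_blocks hn hσ]
  omega

theorem concordant_IaP_self (hσ : IsNoncrossing σ) : Concordant σ (IaP σ z) := by
  refine concordant_iff.2 ⟨card_IaP hz hσ, fun B hB => ?_⟩
  rw [IaP_eq_compl_blockMaxima σ hz, compl_compl,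
    inter_blockMaxima (pairwiseDisjoint_blocks σ) hB (nonempty_of_mem_blocks hB), card_singleton]

theorem domLE_IaP_of_concordant (hσ : IsNoncrossing σ) (hκ : IsNoncrossing κ)
    (hc : Concordant σ (IaP κ z)) : domLE (n - 1) (IaP σ z) (IaP κ z) := by
  rw [concordant_iff, IaP_eq_compl_blockMaxima κ hz, compl_compl] at hc
  have hσI := card_IaP hz hσ
  have hκI := card_IaP hz hκ
  simp only [IaP_eq_compl_blockMaxima _ hz] at hσI hκI ⊢
  exact domLE_compl_of_card_filter_le hσI hκI
    (card_filter_blockMaxima_le (pairwiseDisjoint_blocks σ) hc.2)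

theorem eq_of_IaP_eq (hσ : IsNoncrossing σ) (hκ : IsNoncrossing κ) (h : IaP σ z = IaP κ z) :
    σ = κ := by
  rw [IaP_eq_compl_blockMaxima σ hz, IaP_eq_compl_blockMaxima κ hz, compl_inj_iff] at h
  refine eq_of_isBlockMax_iff_of_isBlockMin_iff hσ hκ
    (fun x => by rw [← bar_mem_blockMaxima_blocks, h, bar_mem_blockMaxima_blocks])
    (isBlockMin_iff_of_isBlockMax_dualPartition_iff hσ hκ fun i => ?_)
  rw [← til_mem_blockMaxima_blocks, h, til_mem_blockMaxima_blocks]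

end Necklace

theorem stmt14 (n : ℕ) (hn : 0 < n) :
    (∀ σ : NCP n, IsNoncrossing σ → Concordant σ (IaP σ ⟨0, by omega⟩)) ∧
    (∀ σ κ : NCP n, IsNoncrossing σ → IsNoncrossing κ →
      Concordant σ (IaP κ ⟨0, by omega⟩) →
      domLE (n-1) (IaP σ ⟨0, by omega⟩) (IaP κ ⟨0, by omega⟩) ∧
      (IaP σ ⟨0, by omega⟩ = IaP κ ⟨0, by omega⟩ → σ = κ)) ∧
    IsUnit (Matrix.of fun κ σ : {σ : NCP n // IsNoncrossing σ} =>
      if Concordant σ.1 (IaP κ.1 ⟨0, by omega⟩) then (1:ℝ) else 0) := by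
  have hz : ((⟨0, by omega⟩ : Fin (2 * n)) : ℕ) = 0 := rfl
  refine ⟨fun σ hσ => concordant_IaP_self hz hσ, fun σ κ hσ hκ hc =>
    ⟨domLE_IaP_of_concordant hz hσ hκ hc, eq_of_IaP_eq hz hσ hκ⟩, ?_⟩
  refine Matrix.isUnit_of_unitriangular
    (fun κ => OrderDual.toDual (∑ x ∈ IaP κ.1 ⟨0, by omega⟩, (x : ℕ)))
    (fun κ => if_pos (concordant_IaP_self hz κ.2)) fun κ σ hne hA => ?_
  have hc : Concordant σ.1 (IaP κ.1 ⟨0, by omega⟩) := by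
    by_contra h
    simp [h] at hA
  exact OrderDual.toDual_lt_toDual.2 (sum_val_lt_sum_val_of_domLE
    (domLE_IaP_of_concordant hz σ.2 κ.2 hc) fun h =>
      hne (Subtype.ext (eq_of_IaP_eq hz σ.2 κ.2 h).symm))

end
end

section
/- Let k ∈ [n], let i = 2k−1, and let X be a real (n−1)×2n matrix whose i-th column is zero. Suppose L : NC_n → ℝ satisfies Δ_I(X) = Σ_{σ ∈ E(I)} L_σ for every (n−1)-element subset I ⊆ [2n]. Then: (a) L_σ = 0 for every σ ∈ NC_n in which {k̄} is not a singleton block; (b) Δ_I(X) = Δ_{(I∖{i−1})∪{i+1}}(X) for every (n−1)-subset I containing the representative of i−1 mod 2n in [2n] but not containing the representative of i+1 mod 2n in [2n]. -/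
open Finset

noncomputable section
open scoped Classical

namespace St16

/-- value of Fin subtraction -/
lemma fin_sub_val {N : ℕ} (x y : Fin N) :
    (x - y).val = if y.val ≤ x.val then x.val - y.val else x.val + N - y.val := by
  have hx := x.isLt; have hy := y.isLt
  rw [Fin.sub_def]
  simp only
  split_ifs with h
  · have h2 : N - y.val + x.val = N + (x.val - y.val) := by omega
    rw [h2, Nat.add_mod_left, Nat.mod_eq_of_lt (by omega)]
  · rw [Nat.mod_eq_of_lt (by omega)]; omega

variable {n : ℕ}

/-- shifted value -/
def vt (t x : Fin n) : ℕ := (x - t).val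

lemma vt_lt (t x : Fin n) : vt t x < n := (x - t).isLt

lemma vt_eq (t x : Fin n) :
    vt t x = if t.val ≤ x.val then x.val - t.val else x.val + n - t.val :=
  fin_sub_val x t

lemma vt_inj {t x y : Fin n} (h : vt t x = vt t y) : x = y := by
  rw [vt_eq, vt_eq] at h
  have hx := x.isLt; have hy := y.isLt; have ht := t.isLt
  apply Fin.ext
  split_ifs at h <;> omega

lemma vt_self (t : Fin n) : vt t t = 0 := by
  rw [vt, fin_sub_val]; simp

lemma sub_val_eq_dvt (t x i : Fin n) :
    (x - i).val = if vt t i ≤ vt t x then vt t x - vt t i else vt t x + n - vt t i := by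
  have hx := x.isLt; have hi := i.isLt; have ht := t.isLt
  rw [fin_sub_val, vt_eq, vt_eq]
  split_ifs <;> omega

lemma mem_cIoc_val {N : ℕ} (i j x : Fin N) (hij : i ≠ j) :
    x ∈ cIoc i j ↔ (0 < (x - i).val ∧ (x - i).val ≤ (j - i).val) := by
  have hi := i.isLt; have hj := j.isLt; have hx := x.isLt
  have hne : i.val ≠ j.val := fun h => hij (Fin.ext h)
  rw [cIoc, Finset.mem_filter]
  simp only [Finset.mem_univ, true_and]
  rw [fin_sub_val, fin_sub_val]
  simp only [Fin.lt_def, Fin.le_def]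
  split_ifs <;> omega

/-- membership in cyclic interval, in shifted coordinates -/
lemma mem_cIoc_vt (t : Fin n) {i j : Fin n} (hij : i ≠ j) (x : Fin n) :
    x ∈ cIoc i j ↔ (if vt t i < vt t j then vt t i < vt t x ∧ vt t x ≤ vt t j
                    else vt t i < vt t x ∨ vt t x ≤ vt t j) := by
  have hne : vt t i ≠ vt t j := fun h => hij (vt_inj h)
  have h1 := vt_lt t i; have h2 := vt_lt t j; have h3 := vt_lt t x
  rw [mem_cIoc_val i j x hij, sub_val_eq_dvt t x i, sub_val_eq_dvt t j i]
  split_ifs <;> omega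

section Partition

variable (σ : NCP n)

lemma sb_refl (x : Fin n) : sameBlock σ x x := by
  obtain ⟨B, hB, hx⟩ := σ.exists_mem (Finset.mem_univ x)
  exact ⟨B, hB, hx, hx⟩

variable {σ}

lemma sb_symm {x y : Fin n} (h : sameBlock σ x y) : sameBlock σ y x := by
  obtain ⟨B, hB, hx, hy⟩ := h; exact ⟨B, hB, hy, hx⟩

lemma sb_trans {x y z : Fin n} (h : sameBlock σ x y) (h' : sameBlock σ y z) :
    sameBlock σ x z := by
  obtain ⟨B, hB, hx, hy⟩ := h; obtain ⟨B', hB', hy', hz⟩ := h'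
  exact ⟨B, hB, hx, σ.eq_of_mem_parts hB' hB hy' hy ▸ hz⟩

variable (σ)

/-- the block of `x` -/
noncomputable def blkOf (x : Fin n) : Finset (Fin n) :=
  (σ.exists_mem (Finset.mem_univ x)).choose

lemma blkOf_mem_parts (x : Fin n) : blkOf σ x ∈ σ.parts :=
  (σ.exists_mem (Finset.mem_univ x)).choose_spec.1

lemma mem_blkOf_self (x : Fin n) : x ∈ blkOf σ x :=
  (σ.exists_mem (Finset.mem_univ x)).choose_spec.2

variable {σ}

lemma blk_eq {B : Finset (Fin n)} {x : Fin n} (hB : B ∈ σ.parts) (hx : x ∈ B) :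
    B = blkOf σ x :=
  σ.eq_of_mem_parts hB (blkOf_mem_parts σ x) hx (mem_blkOf_self σ x)

lemma mem_blkOf_iff {x y : Fin n} : y ∈ blkOf σ x ↔ sameBlock σ x y := by
  constructor
  · exact fun h => ⟨blkOf σ x, blkOf_mem_parts σ x, mem_blkOf_self σ x, h⟩
  · rintro ⟨B, hB, hx, hy⟩; rwa [blk_eq hB hx] at hy

lemma sb_block_eq {x y : Fin n} (h : sameBlock σ x y) : blkOf σ x = blkOf σ y := by
  obtain ⟨B, hB, hx, hy⟩ := h
  rw [← blk_eq hB hx, ← blk_eq hB hy]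

/-- the crossing lemma: two crossing chords (in shifted cyclic order) lie in the
same block, for a noncrossing partition -/
lemma lcross (hnc : IsNoncrossing σ) (t : Fin n) {p q x y : Fin n}
    (hpq : sameBlock σ p q) (hxy : sameBlock σ x y)
    (h1 : vt t p < vt t x) (h2 : vt t x < vt t q) (h3 : vt t q < vt t y) :
    sameBlock σ p x := by
  have lt' : ∀ u w : Fin n, u.val < w.val → u < w := fun u w h => Fin.lt_def.2 h
  have hp := vt_eq t p; have hx := vt_eq t x; have hq := vt_eq t q; have hy := vt_eq t y
  have bp := p.isLt; have bx := x.isLt; have bq := q.isLt; have by' := y.isLt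
  have bt := t.isLt
  have key : (p.val < x.val ∧ x.val < q.val ∧ q.val < y.val) ∨
      (y.val < p.val ∧ p.val < x.val ∧ x.val < q.val) ∨
      (q.val < y.val ∧ y.val < p.val ∧ p.val < x.val) ∨
      (x.val < q.val ∧ q.val < y.val ∧ y.val < p.val) := by
    split_ifs at hp hx hq hy <;> omega
  rcases key with ⟨k1,k2,k3⟩|⟨k1,k2,k3⟩|⟨k1,k2,k3⟩|⟨k1,k2,k3⟩
  · exact hnc p x q y (lt' _ _ k1) (lt' _ _ k2) (lt' _ _ k3) hpq hxy
  · have h := hnc y p x q (lt' _ _ k1) (lt' _ _ k2) (lt' _ _ k3) (sb_symm hxy) hpq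
    exact sb_trans (sb_symm h) (sb_symm hxy)
  · have h := hnc q y p x (lt' _ _ k1) (lt' _ _ k2) (lt' _ _ k3) (sb_symm hpq) (sb_symm hxy)
    exact sb_trans hpq (sb_trans h (sb_symm hxy))
  · have h := hnc x q y p (lt' _ _ k1) (lt' _ _ k2) (lt' _ _ k3) hxy (sb_symm hpq)
    exact sb_trans hpq (sb_symm h)

end Partition

end St16
namespace St16

variable {n : ℕ}

section Dual

variable {σ : NCP n}

lemma dr_refl (σ : NCP n) (i : Fin n) : dualRel σ i i := Or.inl rfl

lemma dr_symm {i j : Fin n} (h : dualRel σ i j) : dualRel σ j i := by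
  rcases h with h | h
  · exact Or.inl h.symm
  · exact Or.inr fun ⟨B, hB, h1, h2⟩ => h ⟨B, hB, h2, h1⟩

lemma dr_trans {i j l : Fin n} (hij : dualRel σ i j) (hjl : dualRel σ j l) :
    dualRel σ i l := by
  by_cases hil : i = l
  · exact Or.inl hil
  by_cases hij' : i = j
  · exact hij' ▸ hjl
  by_cases hjl' : j = l
  · exact hjl' ▸ hij
  have h1 : ¬∃ B ∈ σ.parts, (B ∩ cIoc i j).Nonempty ∧ (B ∩ cIoc j i).Nonempty := by
    rcases hij with h | h; · exact absurd h hij'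
    exact h
  have h2 : ¬∃ B ∈ σ.parts, (B ∩ cIoc j l).Nonempty ∧ (B ∩ cIoc l j).Nonempty := by
    rcases hjl with h | h; · exact absurd h hjl'
    exact h
  right
  rintro ⟨B, hB, ⟨p, hp⟩, ⟨q, hq⟩⟩
  rw [Finset.mem_inter] at hp hq
  obtain ⟨hpB, hparc⟩ := hp; obtain ⟨hqB, hqarc⟩ := hq
  have h0 : vt i i = 0 := vt_self i
  have hJ : vt i j ≠ 0 := fun h => hij' (vt_inj (show vt i i = vt i j by omega))
  have hL : vt i l ≠ 0 := fun h => hil (vt_inj (show vt i i = vt i l by omega))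
  have hJL : vt i j ≠ vt i l := fun h => hjl' (vt_inj h)
  rw [mem_cIoc_vt i hil, h0, if_pos (by omega)] at hparc
  rw [mem_cIoc_vt i (Ne.symm hil), h0, if_neg (by omega)] at hqarc
  rcases lt_or_gt_of_ne hJL with hc | hc
  · rcases le_or_gt (vt i p) (vt i j) with hp2 | hp2
    · refine h1 ⟨B, hB, ⟨p, Finset.mem_inter.2 ⟨hpB, ?_⟩⟩, ⟨q, Finset.mem_inter.2 ⟨hqB, ?_⟩⟩⟩
      · rw [mem_cIoc_vt i hij', h0, if_pos (by omega)]; omega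
      · rw [mem_cIoc_vt i (Ne.symm hij'), h0, if_neg (by omega)]; omega
    · refine h2 ⟨B, hB, ⟨p, Finset.mem_inter.2 ⟨hpB, ?_⟩⟩, ⟨q, Finset.mem_inter.2 ⟨hqB, ?_⟩⟩⟩
      · rw [mem_cIoc_vt i hjl', if_pos (by omega)]; omega
      · rw [mem_cIoc_vt i (Ne.symm hjl'), if_neg (by omega)]; omega
  · by_cases hq0 : vt i q = 0 ∨ vt i j < vt i q
    · refine h1 ⟨B, hB, ⟨p, Finset.mem_inter.2 ⟨hpB, ?_⟩⟩, ⟨q, Finset.mem_inter.2 ⟨hqB, ?_⟩⟩⟩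
      · rw [mem_cIoc_vt i hij', h0, if_pos (by omega)]; omega
      · rw [mem_cIoc_vt i (Ne.symm hij'), h0, if_neg (by omega)]; omega
    · push_neg at hq0
      refine h2 ⟨B, hB, ⟨p, Finset.mem_inter.2 ⟨hpB, ?_⟩⟩, ⟨q, Finset.mem_inter.2 ⟨hqB, ?_⟩⟩⟩
      · rw [mem_cIoc_vt i hjl', if_neg (by omega)]; omega
      · rw [mem_cIoc_vt i (Ne.symm hjl'), if_pos (by omega)]; omega

/-- the dual class of `i` -/
def dcl (σ : NCP n) (i : Fin n) : Finset (Fin n) :=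
  Finset.univ.filter (dualRel σ i)

lemma mem_dcl {i j : Fin n} : j ∈ dcl σ i ↔ dualRel σ i j := by
  simp [dcl]

lemma dcl_self (σ : NCP n) (i : Fin n) : i ∈ dcl σ i := mem_dcl.2 (dr_refl σ i)

lemma dcl_eq {i j : Fin n} (h : dualRel σ i j) : dcl σ i = dcl σ j := by
  ext z
  simp only [mem_dcl]
  exact ⟨fun h' => dr_trans (dr_symm h) h', fun h' => dr_trans h h'⟩

end Dual

section KLemmas

variable {σ : NCP n} {t : Fin n}

/-- `x` is the `t`-shifted minimum of its block -/
def MnS (σ : NCP n) (t : Fin n) : Finset (Fin n) :=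
  Finset.univ.filter (fun x => ∀ y, sameBlock σ x y → vt t x ≤ vt t y)

/-- `x` is the `t`-shifted maximum of its block -/
def MxS (σ : NCP n) (t : Fin n) : Finset (Fin n) :=
  Finset.univ.filter (fun x => ∀ y, sameBlock σ x y → vt t y ≤ vt t x)

/-- `x` is the `t`-shifted maximum of its dual class -/
def MdS (σ : NCP n) (t : Fin n) : Finset (Fin n) :=
  Finset.univ.filter (fun x => ∀ y, dualRel σ x y → vt t y ≤ vt t x)

lemma mem_MnS {x : Fin n} : x ∈ MnS σ t ↔ ∀ y, sameBlock σ x y → vt t x ≤ vt t y := by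
  simp [MnS]
lemma mem_MxS {x : Fin n} : x ∈ MxS σ t ↔ ∀ y, sameBlock σ x y → vt t y ≤ vt t x := by
  simp [MxS]
lemma mem_MdS {x : Fin n} : x ∈ MdS σ t ↔ ∀ y, dualRel σ x y → vt t y ≤ vt t x := by
  simp [MdS]

lemma vt_succ [NeZero n] {x : Fin n} (hx : vt t x < n - 1) : vt t (x + 1) = vt t x + 1 := by
  have hvx := vt_lt t x
  have hn : 2 ≤ n := by omega
  have h1 : (x + 1).val = (x.val + 1) % n := by
    rw [Fin.add_def, Fin.val_one', Nat.mod_eq_of_lt hn]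
  have h2 : (x.val + 1) % n = if x.val + 1 < n then x.val + 1 else 0 := by
    split_ifs with h
    · exact Nat.mod_eq_of_lt h
    · have hxl := x.isLt
      have hxn : x.val + 1 = n := by omega
      rw [hxn, Nat.mod_self]
  rw [vt_eq t x] at hx
  rw [vt_eq t (x+1), vt_eq t x, h1, h2]
  have ht := t.isLt; have hxl := x.isLt
  split_ifs at hx ⊢ <;> omega

lemma vt_top [NeZero n] (t : Fin n) : vt t (t - 1) = n - 1 := by
  have hn := t.pos
  have h1 : (t - 1).val = if (1 : Fin n).val ≤ t.val then t.val - (1:Fin n).val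
      else t.val + n - (1:Fin n).val := fin_sub_val t 1
  have hv1 : (1 : Fin n).val = 1 % n := Fin.val_one' n
  have h1n : 1 % n = if n = 1 then 0 else 1 := by
    split_ifs with h
    · rw [h]
    · exact Nat.mod_eq_of_lt (by omega)
  have ht := t.isLt
  rw [vt_eq t (t-1), h1, hv1, h1n]
  split_ifs <;> omega

lemma K1a [NeZero n] {x : Fin n} (hx : vt t x < n - 1) (h : x + 1 ∉ MnS σ t) : x ∈ MdS σ t := by
  rw [mem_MnS] at h
  push_neg at h
  obtain ⟨j, hsb, hj⟩ := h
  rw [mem_MdS]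
  intro l hdl
  by_contra hcon
  push_neg at hcon
  have hxl : x ≠ l := by intro h; rw [h] at hcon; omega
  rcases hdl with h | hno
  · exact hxl h
  have hsucc := vt_succ hx
  refine hno ⟨blkOf σ (x+1), blkOf_mem_parts σ (x+1),
    ⟨x+1, Finset.mem_inter.2 ⟨mem_blkOf_self σ (x+1), ?_⟩⟩,
    ⟨j, Finset.mem_inter.2 ⟨mem_blkOf_iff.2 hsb, ?_⟩⟩⟩
  · rw [mem_cIoc_vt t hxl, if_pos (by omega)]; omega
  · rw [mem_cIoc_vt t (Ne.symm hxl), if_neg (by omega)]; omega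

lemma sb_of_mem {B : Finset (Fin n)} (hB : B ∈ σ.parts) {x y : Fin n}
    (hx : x ∈ B) (hy : y ∈ B) : sameBlock σ x y := ⟨B, hB, hx, hy⟩

lemma blocks_eq_of_sb {B B' : Finset (Fin n)} (hB : B ∈ σ.parts) (hB' : B' ∈ σ.parts)
    {x y : Fin n} (hx : x ∈ B) (hy : y ∈ B') (h : sameBlock σ x y) : B = B' := by
  obtain ⟨C, hC, hxC, hyC⟩ := h
  rw [σ.eq_of_mem_parts hB hC hx hxC, σ.eq_of_mem_parts hB' hC hy hyC]

lemma K1b [NeZero n] (hnc : IsNoncrossing σ) {x : Fin n} (hx : vt t x < n - 1)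
    (hmin : x + 1 ∈ MnS σ t) : x ∉ MdS σ t := by
  intro hMd
  rw [mem_MdS] at hMd
  rw [mem_MnS] at hmin
  obtain ⟨l, hlB, hlmax⟩ := Finset.exists_max_image (blkOf σ (x+1)) (vt t)
    ⟨x+1, mem_blkOf_self σ (x+1)⟩
  have hsucc := vt_succ hx
  have hl1 : vt t (x+1) ≤ vt t l := hlmax _ (mem_blkOf_self σ (x+1))
  have hxlv : vt t x < vt t l := by omega
  have hxl : x ≠ l := by intro h; rw [h] at hxlv; omega
  have hdual : dualRel σ x l := by
    right
    rintro ⟨B', hB', ⟨p, hp⟩, ⟨q, hq⟩⟩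
    rw [Finset.mem_inter] at hp hq
    obtain ⟨hpB, hparc⟩ := hp; obtain ⟨hqB, hqarc⟩ := hq
    rw [mem_cIoc_vt t hxl, if_pos (by omega)] at hparc
    rw [mem_cIoc_vt t (Ne.symm hxl), if_neg (by omega)] at hqarc
    by_cases hBeq : B' = blkOf σ (x+1)
    · subst hBeq
      have hq1 : vt t (x+1) ≤ vt t q := hmin q (mem_blkOf_iff.1 hqB)
      have hq2 : vt t q ≤ vt t l := hlmax q hqB
      omega
    · have hpx1 : p ≠ x + 1 := by
        intro h
        exact hBeq (blocks_eq_of_sb hB' (blkOf_mem_parts σ (x+1)) hpB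
          (mem_blkOf_self σ (x+1)) (h ▸ sb_refl σ p))
      have hpl : p ≠ l := by
        intro h
        exact hBeq (blocks_eq_of_sb hB' (blkOf_mem_parts σ (x+1)) hpB hlB
          (h ▸ sb_refl σ p))
      have hp1 : vt t (x+1) < vt t p := by
        have h1 : vt t (x+1) ≤ vt t p := by
          rcases Nat.lt_or_ge (vt t p) (vt t (x+1)) with h | h
          · omega
          · exact h
        rcases Nat.eq_or_lt_of_le h1 with h | h
        · exact absurd (vt_inj h) (Ne.symm hpx1)
        · exact h
      have hp2 : vt t p < vt t l := by
        rcases Nat.eq_or_lt_of_le hparc.2 with h | h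
        · exact absurd (vt_inj h) hpl
        · exact h
      have hsbpq : sameBlock σ p q := sb_of_mem hB' hpB hqB
      have hsbxl : sameBlock σ (x+1) l := mem_blkOf_iff.1 hlB
      rcases hqarc with hq1 | hq1
      · -- pattern x+1 < p < l < q
        have h := lcross hnc t hsbxl hsbpq hp1 hp2 hq1
        exact hBeq (blocks_eq_of_sb hB' (blkOf_mem_parts σ (x+1)) hpB
          (mem_blkOf_self σ (x+1)) (sb_symm h))
      · -- pattern q < x+1 < p < l
        have hqx : vt t q < vt t (x+1) := by omega
        have h := lcross hnc t (sb_symm hsbpq) hsbxl hqx hp1 hp2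
        -- h : sameBlock σ q (x+1)
        exact hBeq (blocks_eq_of_sb hB' (blkOf_mem_parts σ (x+1)) hqB
          (mem_blkOf_self σ (x+1)) h)
  exact absurd (hMd l hdual) (by omega)

lemma t_mem_MnS (σ : NCP n) (t : Fin n) : t ∈ MnS σ t := by
  rw [mem_MnS]
  intro y _
  rw [vt_self]
  omega

lemma MdS_char [NeZero n] (hnc : IsNoncrossing σ) :
    MdS σ t = insert (t - 1)
      (Finset.univ.filter (fun x => vt t x < n - 1 ∧ x + 1 ∉ MnS σ t)) := by
  ext x
  rw [Finset.mem_insert, Finset.mem_filter]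
  constructor
  · intro hx
    by_cases hxt : x = t - 1
    · exact Or.inl hxt
    · right
      refine ⟨Finset.mem_univ x, ?_, ?_⟩
      · have h1 : vt t x ≠ n - 1 := fun h => hxt (vt_inj (h.trans (vt_top t).symm))
        have := vt_lt t x
        omega
      · intro hmem
        have h1 : vt t x < n - 1 := by
          have h1 : vt t x ≠ n - 1 := fun h => hxt (vt_inj (h.trans (vt_top t).symm))
          have := vt_lt t x
          omega
        exact K1b hnc h1 hmem hx
  · rintro (rfl | ⟨_, h1, h2⟩)
    · rw [mem_MdS]
      intro y _
      rw [vt_top]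
      have := vt_lt t y
      omega
    · exact K1a h1 h2

lemma card_MnS (σ : NCP n) (t : Fin n) : (MnS σ t).card = σ.parts.card := by
  refine Finset.card_bij (fun x _ => blkOf σ x) (fun x _ => blkOf_mem_parts σ x) ?_ ?_
  · intro x1 h1 x2 h2 heq
    rw [mem_MnS] at h1 h2
    have heq' : blkOf σ x1 = blkOf σ x2 := heq
    have hsb : sameBlock σ x1 x2 := mem_blkOf_iff.1 (heq' ▸ mem_blkOf_self σ x2)
    exact vt_inj (le_antisymm (h1 x2 hsb) (h2 x1 (sb_symm hsb)))
  · intro B hB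
    obtain ⟨m, hm, hmin⟩ := Finset.exists_min_image B (vt t) (σ.nonempty_of_mem_parts hB)
    refine ⟨m, ?_, (blk_eq hB hm).symm⟩
    rw [mem_MnS]
    intro y hsb
    exact hmin y ((blk_eq hB hm) ▸ mem_blkOf_iff.2 hsb)

lemma card_MxS (σ : NCP n) (t : Fin n) : (MxS σ t).card = σ.parts.card := by
  refine Finset.card_bij (fun x _ => blkOf σ x) (fun x _ => blkOf_mem_parts σ x) ?_ ?_
  · intro x1 h1 x2 h2 heq
    rw [mem_MxS] at h1 h2
    have heq' : blkOf σ x1 = blkOf σ x2 := heq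
    have hsb : sameBlock σ x1 x2 := mem_blkOf_iff.1 (heq' ▸ mem_blkOf_self σ x2)
    exact vt_inj (le_antisymm (h2 x1 (sb_symm hsb)) (h1 x2 hsb))
  · intro B hB
    obtain ⟨m, hm, hmax⟩ := Finset.exists_max_image B (vt t) (σ.nonempty_of_mem_parts hB)
    refine ⟨m, ?_, (blk_eq hB hm).symm⟩
    rw [mem_MxS]
    intro y hsb
    exact hmax y ((blk_eq hB hm) ▸ mem_blkOf_iff.2 hsb)

lemma card_MdS (σ : NCP n) (t : Fin n) :
    (MdS σ t).card = (Finset.univ.image (dcl σ)).card := by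
  refine Finset.card_bij (fun x _ => dcl σ x)
    (fun x _ => Finset.mem_image.2 ⟨x, Finset.mem_univ x, rfl⟩) ?_ ?_
  · intro x1 h1 x2 h2 heq
    rw [mem_MdS] at h1 h2
    have heq' : dcl σ x1 = dcl σ x2 := heq
    have hd : dualRel σ x1 x2 := mem_dcl.1 (heq' ▸ dcl_self σ x2)
    exact vt_inj (le_antisymm (h2 x1 (dr_symm hd)) (h1 x2 hd))
  · intro D hD
    obtain ⟨i, _, rfl⟩ := Finset.mem_image.1 hD
    obtain ⟨z, hz, hmax⟩ := Finset.exists_max_image (dcl σ i) (vt t) ⟨i, dcl_self σ i⟩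
    have hzeq : dcl σ z = dcl σ i := (dcl_eq (mem_dcl.1 hz)).symm
    refine ⟨z, ?_, hzeq⟩
    rw [mem_MdS]
    intro y hy
    exact hmax y (hzeq ▸ mem_dcl.2 hy)

lemma count_key [NeZero n] (hnc : IsNoncrossing σ) (t : Fin n) :
    (MdS σ t).card + (MnS σ t).card = n + 1 := by
  have hn := t.pos
  have hchar := MdS_char (t := t) hnc
  have hnotmem : t - 1 ∉ Finset.univ.filter (fun x => vt t x < n - 1 ∧ x + 1 ∉ MnS σ t) := by
    rw [Finset.mem_filter]
    rintro ⟨_, h1, _⟩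
    rw [vt_top] at h1
    omega
  have hU : (Finset.univ.filter (fun y => y ∉ MnS σ t)) = Finset.univ \ MnS σ t := by
    ext y; simp
  have hcardU : (Finset.univ.filter (fun y => y ∉ MnS σ t)).card = n - (MnS σ t).card := by
    rw [hU, Finset.card_sdiff_of_subset (Finset.subset_univ _)]
    simp
  have hbij : (Finset.univ.filter (fun x => vt t x < n - 1 ∧ x + 1 ∉ MnS σ t)).card
      = (Finset.univ.filter (fun y => y ∉ MnS σ t)).card := by
    refine Finset.card_bij (fun x _ => x + 1) ?_ ?_ ?_
    · intro x hx
      rw [Finset.mem_filter] at hx ⊢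
      exact ⟨Finset.mem_univ _, hx.2.2⟩
    · intro x1 h1 x2 h2 heq
      exact add_right_cancel heq
    · intro y hy
      rw [Finset.mem_filter] at hy
      have hyt : y ≠ t := fun h => hy.2 (h ▸ t_mem_MnS σ t)
      refine ⟨y - 1, ?_, by show y - 1 + 1 = y; exact sub_add_cancel y 1⟩
      rw [Finset.mem_filter]
      have h1 : vt t (y - 1) < n - 1 := by
        have h2 : vt t (y - 1) ≠ n - 1 := by
          intro h
          have : y - 1 = t - 1 := vt_inj (h.trans (vt_top t).symm)
          exact hyt (by
            have := congrArg (· + 1) this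
            simpa [sub_add_cancel] using this)
        have := vt_lt t (y - 1)
        omega
      refine ⟨Finset.mem_univ _, h1, ?_⟩
      rw [show y - 1 + 1 = y from sub_add_cancel y 1]
      exact hy.2
  have hMn_le : (MnS σ t).card ≤ n := by
    calc (MnS σ t).card ≤ (Finset.univ : Finset (Fin n)).card :=
          Finset.card_le_card (Finset.subset_univ _)
    _ = n := by simp
  have hMn_pos : 1 ≤ (MnS σ t).card := Finset.card_pos.2 ⟨t, t_mem_MnS σ t⟩
  rw [hchar, Finset.card_insert_of_notMem hnotmem, hbij, hcardU]
  omega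

end KLemmas

end St16
namespace St16

variable {n : ℕ}

section BarTil

variable {σ : NCP n} {t : Fin n}

lemma bar_val (i : Fin n) : (bar i).val = 2 * i.val := rfl
lemma til_val (i : Fin n) : (til i).val = 2 * i.val + 1 := rfl

lemma v_bar (t i : Fin n) : vt (bar t) (bar i) = 2 * vt t i := by
  have h1 := i.isLt; have h2 := t.isLt
  have e1 : (bar t).val = 2 * t.val := rfl
  have e2 : (bar i).val = 2 * i.val := rfl
  rw [vt_eq, vt_eq, e1, e2]
  split_ifs <;> omega

lemma v_til (t i : Fin n) : vt (bar t) (til i) = 2 * vt t i + 1 := by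
  have h1 := i.isLt; have h2 := t.isLt
  have e1 : (bar t).val = 2 * t.val := rfl
  have e2 : (til i).val = 2 * i.val + 1 := rfl
  rw [vt_eq, vt_eq, e1, e2]
  split_ifs <;> omega

lemma bar_inj {i j : Fin n} (h : bar i = bar j) : i = j := by
  have := congrArg Fin.val h
  rw [bar_val, bar_val] at this
  exact Fin.ext (by omega)

lemma til_inj {i j : Fin n} (h : til i = til j) : i = j := by
  have := congrArg Fin.val h
  rw [til_val, til_val] at this
  exact Fin.ext (by omega)

lemma bar_ne_til (i j : Fin n) : bar i ≠ til j := by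
  intro h
  have := congrArg Fin.val h
  rw [bar_val, til_val] at this
  omega

lemma mem_maxAt {m : ℕ} {a x : Fin m} {S : Finset (Fin m)} :
    x ∈ maxAt a S ↔ x ∈ S ∧ ∀ y ∈ S, vt a y ≤ vt a x := by
  rw [maxAt, Finset.mem_filter]
  exact and_congr_right fun _ =>
    ⟨fun h y hy => Fin.le_def.1 (h y hy), fun h y hy => Fin.le_def.2 (h y hy)⟩

/-- `vt t`-argmax of a finset -/
noncomputable def amax (t : Fin n) (B : Finset (Fin n)) : Fin n :=
  if h : B.Nonempty then (Finset.exists_max_image B (vt t) h).choose else t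

lemma amax_mem {B : Finset (Fin n)} (h : B.Nonempty) : amax t B ∈ B := by
  rw [amax, dif_pos h]
  exact (Finset.exists_max_image B (vt t) h).choose_spec.1

lemma amax_max {B : Finset (Fin n)} (h : B.Nonempty) :
    ∀ y ∈ B, vt t y ≤ vt t (amax t B) := by
  rw [amax, dif_pos h]
  exact (Finset.exists_max_image B (vt t) h).choose_spec.2

lemma maxAt_image_emb {g : Fin n → Fin (2*n)} (hg : ∀ i j, g i = g j → i = j)
    (hmono : ∀ u w : Fin n, vt (bar t) (g u) ≤ vt (bar t) (g w) ↔ vt t u ≤ vt t w)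
    {B : Finset (Fin n)} (hB : B.Nonempty) :
    maxAt (bar t) (B.image g) = {g (amax t B)} := by
  ext z
  rw [mem_maxAt, Finset.mem_singleton]
  constructor
  · rintro ⟨hz, hmax⟩
    obtain ⟨u, hu, rfl⟩ := Finset.mem_image.1 hz
    have h1 : ∀ w ∈ B, vt t w ≤ vt t u := by
      intro w hw
      exact (hmono w u).1 (hmax _ (Finset.mem_image.2 ⟨w, hw, rfl⟩))
    have h2 : vt t u = vt t (amax t B) :=
      le_antisymm (amax_max hB u hu) (h1 _ (amax_mem hB))
    rw [vt_inj h2]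
  · rintro rfl
    refine ⟨Finset.mem_image.2 ⟨amax t B, amax_mem hB, rfl⟩, ?_⟩
    intro y hy
    obtain ⟨w, hw, rfl⟩ := Finset.mem_image.1 hy
    exact (hmono w (amax t B)).2 (amax_max hB w hw)

lemma maxAt_bar_eq {B : Finset (Fin n)} (hB : B.Nonempty) :
    maxAt (bar t) (B.image bar) = {bar (amax t B)} :=
  maxAt_image_emb (fun _ _ => bar_inj)
    (fun u w => by rw [v_bar, v_bar]; omega) hB

lemma maxAt_til_eq {B : Finset (Fin n)} (hB : B.Nonempty) :
    maxAt (bar t) (B.image til) = {til (amax t B)} :=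
  maxAt_image_emb (fun _ _ => til_inj)
    (fun u w => by rw [v_til, v_til]; omega) hB

end BarTil

section IaPFacts

variable {σ : NCP n} {t : Fin n}

/-- the removed set: complement of `IaP σ (bar t)` -/
def Rem (σ : NCP n) (t : Fin n) : Finset (Fin (2*n)) :=
  (σ.parts.biUnion fun B => maxAt (bar t) (B.image bar)) ∪
    ((Finset.univ : Finset (Fin n)).biUnion fun i =>
      maxAt (bar t) ((Finset.univ.filter (dualRel σ i)).image til))

lemma IaP_eq (σ : NCP n) (t : Fin n) : IaP σ (bar t) = Finset.univ \ Rem σ t := rfl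

lemma IaP_compl (σ : NCP n) (t : Fin n) : Finset.univ \ IaP σ (bar t) = Rem σ t := by
  rw [IaP_eq, Finset.sdiff_sdiff_eq_self (Finset.subset_univ _)]

lemma dcl_eq_filter (σ : NCP n) (i : Fin n) :
    Finset.univ.filter (dualRel σ i) = dcl σ i := rfl

lemma Rem_eq (σ : NCP n) (t : Fin n) :
    Rem σ t = (σ.parts.biUnion fun B => maxAt (bar t) (B.image bar)) ∪
      ((Finset.univ.image (dcl σ)).biUnion fun D => maxAt (bar t) (D.image til)) := by
  rw [Rem, Finset.image_biUnion]
  rfl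

lemma parts_disj {B B' : Finset (Fin n)} (hB : B ∈ σ.parts) (hB' : B' ∈ σ.parts)
    (hne : B ≠ B') : Disjoint B B' := by
  rw [Finset.disjoint_left]
  intro x hx hx'
  exact hne (σ.eq_of_mem_parts hB hB' hx hx')

lemma dcl_disj {D D' : Finset (Fin n)} (hD : D ∈ Finset.univ.image (dcl σ))
    (hD' : D' ∈ Finset.univ.image (dcl σ)) (hne : D ≠ D') : Disjoint D D' := by
  obtain ⟨i, _, rfl⟩ := Finset.mem_image.1 hD
  obtain ⟨j, _, rfl⟩ := Finset.mem_image.1 hD'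
  rw [Finset.disjoint_left]
  intro x hx hx'
  exact hne (by
    rw [dcl_eq (mem_dcl.1 hx)]
    rw [dcl_eq (mem_dcl.1 hx')])

lemma image_disj {g : Fin n → Fin (2*n)} (hg : ∀ i j, g i = g j → i = j)
    {B B' : Finset (Fin n)} (h : Disjoint B B') :
    Disjoint (B.image g) (B'.image g) := by
  rw [Finset.disjoint_left]
  rintro x hx hx'
  obtain ⟨u, hu, rfl⟩ := Finset.mem_image.1 hx
  obtain ⟨w, hw, hww⟩ := Finset.mem_image.1 hx'
  exact Finset.disjoint_left.1 h hu (hg w u hww ▸ hw)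

lemma mem_R1_even {x : Fin (2*n)}
    (hx : x ∈ σ.parts.biUnion fun B => maxAt (bar t) (B.image bar)) :
    ∃ u : Fin n, x = bar u := by
  obtain ⟨B, _, hxB⟩ := Finset.mem_biUnion.1 hx
  have := Finset.filter_subset _ _ hxB
  obtain ⟨u, _, rfl⟩ := Finset.mem_image.1 this
  exact ⟨u, rfl⟩

lemma mem_R2_odd {x : Fin (2*n)}
    (hx : x ∈ (Finset.univ.image (dcl σ)).biUnion fun D => maxAt (bar t) (D.image til)) :
    ∃ u : Fin n, x = til u := by
  obtain ⟨D, _, hxD⟩ := Finset.mem_biUnion.1 hx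
  have := Finset.filter_subset _ _ hxD
  obtain ⟨u, _, rfl⟩ := Finset.mem_image.1 this
  exact ⟨u, rfl⟩

lemma card_Rem (hnc : IsNoncrossing σ) [NeZero n] : (Rem σ t).card = n + 1 := by
  rw [Rem_eq]
  have hd1 : ∀ B ∈ σ.parts, ∀ B' ∈ σ.parts, B ≠ B' →
      Disjoint (maxAt (bar t) (B.image bar)) (maxAt (bar t) (B'.image bar)) := by
    intro B hB B' hB' hne
    exact Finset.disjoint_of_subset_left (Finset.filter_subset _ _)
      (Finset.disjoint_of_subset_right (Finset.filter_subset _ _)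
        (image_disj (fun _ _ => bar_inj) (parts_disj hB hB' hne)))
  have hd2 : ∀ D ∈ Finset.univ.image (dcl σ), ∀ D' ∈ Finset.univ.image (dcl σ), D ≠ D' →
      Disjoint (maxAt (bar t) (D.image til)) (maxAt (bar t) (D'.image til)) := by
    intro D hD D' hD' hne
    exact Finset.disjoint_of_subset_left (Finset.filter_subset _ _)
      (Finset.disjoint_of_subset_right (Finset.filter_subset _ _)
        (image_disj (fun _ _ => til_inj) (dcl_disj hD hD' hne)))
  have hdisj : Disjoint (σ.parts.biUnion fun B => maxAt (bar t) (B.image bar))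
      ((Finset.univ.image (dcl σ)).biUnion fun D => maxAt (bar t) (D.image til)) := by
    rw [Finset.disjoint_left]
    intro x hx hx'
    obtain ⟨u, rfl⟩ := mem_R1_even hx
    obtain ⟨w, hw⟩ := mem_R2_odd hx'
    exact bar_ne_til u w hw
  rw [Finset.card_union_of_disjoint hdisj, Finset.card_biUnion hd1, Finset.card_biUnion hd2]
  have h1 : ∀ B ∈ σ.parts, (maxAt (bar t) (B.image bar)).card = 1 := by
    intro B hB
    rw [maxAt_bar_eq (σ.nonempty_of_mem_parts hB), Finset.card_singleton]
  have h2 : ∀ D ∈ Finset.univ.image (dcl σ), (maxAt (bar t) (D.image til)).card = 1 := by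
    intro D hD
    obtain ⟨i, _, rfl⟩ := Finset.mem_image.1 hD
    rw [maxAt_til_eq ⟨i, dcl_self σ i⟩, Finset.card_singleton]
  rw [Finset.sum_congr rfl h1, Finset.sum_congr rfl h2]
  simp only [Finset.sum_const, smul_eq_mul, mul_one]
  rw [← card_MnS σ t, ← card_MdS σ t]
  have := count_key (t := t) hnc
  omega

lemma card_IaP (hnc : IsNoncrossing σ) [NeZero n] : (IaP σ (bar t)).card = n - 1 := by
  rw [IaP_eq, Finset.card_sdiff_of_subset (Finset.subset_univ _), card_Rem hnc]
  simp only [Finset.card_univ, Fintype.card_fin]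
  omega

lemma bar_mem_Rem_iff [NeZero n] (x : Fin n) : bar x ∈ Rem σ t ↔ x ∈ MxS σ t := by
  rw [Rem_eq, Finset.mem_union]
  constructor
  · intro h
    rcases h with h | h
    · obtain ⟨B, hB, hxB⟩ := Finset.mem_biUnion.1 h
      rw [maxAt_bar_eq (σ.nonempty_of_mem_parts hB)] at hxB
      have hx : x = amax t B := bar_inj (Finset.mem_singleton.1 hxB)
      rw [mem_MxS]
      intro y hy
      have hxB' : x ∈ B := hx ▸ amax_mem (σ.nonempty_of_mem_parts hB)
      have hyB : y ∈ B := by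
        rw [blk_eq hB hxB']
        exact mem_blkOf_iff.2 hy
      exact hx ▸ amax_max (σ.nonempty_of_mem_parts hB) y hyB
    · obtain ⟨u, hu⟩ := mem_R2_odd h
      exact absurd hu (bar_ne_til x u)
  · intro h
    left
    rw [mem_MxS] at h
    refine Finset.mem_biUnion.2 ⟨blkOf σ x, blkOf_mem_parts σ x, ?_⟩
    rw [maxAt_bar_eq ⟨x, mem_blkOf_self σ x⟩, Finset.mem_singleton]
    have h1 : vt t x = vt t (amax t (blkOf σ x)) :=
      le_antisymm (amax_max ⟨x, mem_blkOf_self σ x⟩ x (mem_blkOf_self σ x))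
        (h _ (mem_blkOf_iff.1 (amax_mem ⟨x, mem_blkOf_self σ x⟩)))
    exact congrArg bar (vt_inj h1)

lemma til_mem_Rem_iff [NeZero n] (x : Fin n) : til x ∈ Rem σ t ↔ x ∈ MdS σ t := by
  rw [Rem_eq, Finset.mem_union]
  constructor
  · intro h
    rcases h with h | h
    · obtain ⟨u, hu⟩ := mem_R1_even h
      exact absurd hu.symm (bar_ne_til u x)
    · obtain ⟨D, hD, hxD⟩ := Finset.mem_biUnion.1 h
      obtain ⟨i, _, rfl⟩ := Finset.mem_image.1 hD
      rw [maxAt_til_eq ⟨i, dcl_self σ i⟩] at hxD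
      have hx : x = amax t (dcl σ i) := til_inj (Finset.mem_singleton.1 hxD)
      rw [mem_MdS]
      intro y hy
      have hxD' : x ∈ dcl σ i := hx ▸ amax_mem ⟨i, dcl_self σ i⟩
      have hyD : y ∈ dcl σ i := by
        rw [dcl_eq (mem_dcl.1 hxD')]
        exact mem_dcl.2 hy
      exact hx ▸ amax_max ⟨i, dcl_self σ i⟩ y hyD
  · intro h
    right
    rw [mem_MdS] at h
    refine Finset.mem_biUnion.2 ⟨dcl σ x, Finset.mem_image.2 ⟨x, Finset.mem_univ x, rfl⟩, ?_⟩
    rw [maxAt_til_eq ⟨x, dcl_self σ x⟩, Finset.mem_singleton]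
    have h1 : vt t x = vt t (amax t (dcl σ x)) :=
      le_antisymm (amax_max ⟨x, dcl_self σ x⟩ x (dcl_self σ x))
        (h _ (mem_dcl.1 (amax_mem ⟨x, dcl_self σ x⟩)))
    exact congrArg til (vt_inj h1)

end IaPFacts

end St16
namespace St16

variable {n : ℕ}

section Concord

variable {σ : NCP n} {t : Fin n}

lemma concord_IaP [NeZero n] (hnc : IsNoncrossing σ) : Concordant σ (IaP σ (bar t)) := by
  refine ⟨card_IaP hnc, ?_, ?_⟩
  · intro B hB
    rw [IaP_compl]
    have hBne := σ.nonempty_of_mem_parts hB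
    have hkey : B.image bar ∩ Rem σ t = {bar (amax t B)} := by
      ext z
      rw [Finset.mem_inter, Finset.mem_singleton]
      constructor
      · rintro ⟨hz1, hz2⟩
        obtain ⟨u, hu, rfl⟩ := Finset.mem_image.1 hz1
        have hMx : u ∈ MxS σ t := (bar_mem_Rem_iff u).1 hz2
        rw [mem_MxS] at hMx
        have h1 : vt t u = vt t (amax t B) :=
          le_antisymm (amax_max hBne u hu) (hMx _ (sb_of_mem hB hu (amax_mem hBne)))
        exact congrArg bar (vt_inj h1)
      · rintro rfl
        refine ⟨Finset.mem_image.2 ⟨_, amax_mem hBne, rfl⟩, ?_⟩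
        rw [bar_mem_Rem_iff, mem_MxS]
        intro y hy
        have hyB : y ∈ B := by
          rw [blk_eq hB (amax_mem hBne)]
          exact mem_blkOf_iff.2 hy
        exact amax_max hBne y hyB
    rw [hkey, Finset.card_singleton]
  · intro i
    rw [IaP_compl]
    have hDne : (dcl σ i).Nonempty := ⟨i, dcl_self σ i⟩
    have hkey : (dcl σ i).image til ∩ Rem σ t = {til (amax t (dcl σ i))} := by
      ext z
      rw [Finset.mem_inter, Finset.mem_singleton]
      constructor
      · rintro ⟨hz1, hz2⟩
        obtain ⟨u, hu, rfl⟩ := Finset.mem_image.1 hz1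
        have hMd : u ∈ MdS σ t := (til_mem_Rem_iff u).1 hz2
        rw [mem_MdS] at hMd
        have huD : dcl σ u = dcl σ i := (dcl_eq (mem_dcl.1 hu)).symm
        have hmm : amax t (dcl σ i) ∈ dcl σ u := by rw [huD]; exact amax_mem hDne
        have h1 : vt t u = vt t (amax t (dcl σ i)) :=
          le_antisymm (amax_max hDne u hu) (hMd _ (mem_dcl.1 hmm))
        exact congrArg til (vt_inj h1)
      · rintro rfl
        refine ⟨Finset.mem_image.2 ⟨_, amax_mem hDne, rfl⟩, ?_⟩
        rw [til_mem_Rem_iff, mem_MdS]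
        intro y hy
        have ham : dualRel σ i (amax t (dcl σ i)) := mem_dcl.1 (amax_mem hDne)
        have hyD : y ∈ dcl σ i := mem_dcl.2 (dr_trans ham hy)
        exact amax_max hDne y hyD
    show ((dcl σ i).image til ∩ Rem σ t).card = 1
    rw [hkey, Finset.card_singleton]

lemma singleton_not_concord {I : Finset (Fin (2*n))} (hsing : ({t} : Finset (Fin n)) ∈ σ.parts)
    (hc : Concordant σ I) : bar t ∉ I := by
  have h := hc.2.1 {t} hsing
  rw [Finset.image_singleton] at h
  have hpos : 0 < (({bar t} : Finset (Fin (2*n))) ∩ (Finset.univ \ I)).card := by rw [h]; omega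
  obtain ⟨x, hx⟩ := Finset.card_pos.1 hpos
  rw [Finset.mem_inter, Finset.mem_singleton] at hx
  obtain ⟨rfl, hx2⟩ := hx
  exact (Finset.mem_sdiff.1 hx2).2

lemma bar_t_mem_IaP [NeZero n] (h : ({t} : Finset (Fin n)) ∉ σ.parts) :
    bar t ∈ IaP σ (bar t) := by
  rw [IaP_eq, Finset.mem_sdiff]
  refine ⟨Finset.mem_univ _, ?_⟩
  rw [bar_mem_Rem_iff, mem_MxS]
  intro hMx
  apply h
  have hblk : blkOf σ t = {t} := by
    apply Finset.eq_singleton_iff_unique_mem.2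
    refine ⟨mem_blkOf_self σ t, ?_⟩
    intro y hy
    have h1 : vt t y ≤ vt t t := hMx y (mem_blkOf_iff.1 hy)
    rw [vt_self] at h1
    have h2 : vt t y = vt t t := by rw [vt_self]; omega
    exact vt_inj h2
  rw [← hblk]
  exact blkOf_mem_parts σ t

/-- the main weight comparison: the canonical concordant set has minimal weight,
uniquely so -/
lemma weight_main [NeZero n] (hnc : IsNoncrossing σ) {I : Finset (Fin (2*n))}
    (hc : Concordant σ I) :
    (∑ x ∈ IaP σ (bar t), vt (bar t) x) ≤ (∑ x ∈ I, vt (bar t) x) ∧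
    ((∑ x ∈ IaP σ (bar t), vt (bar t) x) = (∑ x ∈ I, vt (bar t) x) → I = IaP σ (bar t)) := by
  classical
  obtain ⟨hcard, hblocks, hdual⟩ := hc
  set v : Fin (2*n) → ℕ := vt (bar t) with hv
  set C : Finset (Fin (2*n)) := Finset.univ \ I with hCdef
  set U1 : Finset (Fin (2*n)) := σ.parts.biUnion (fun B => B.image bar) with hU1def
  set U2 : Finset (Fin (2*n)) :=
    (Finset.univ.image (dcl σ)).biUnion (fun D => D.image til) with hU2def
  set R1 : Finset (Fin (2*n)) :=
    σ.parts.biUnion (fun B => maxAt (bar t) (B.image bar)) with hR1def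
  set R2 : Finset (Fin (2*n)) :=
    (Finset.univ.image (dcl σ)).biUnion (fun D => maxAt (bar t) (D.image til)) with hR2def
  have hRem : Rem σ t = R1 ∪ R2 := Rem_eq σ t
  have h2 : ∀ D ∈ Finset.univ.image (dcl σ), ((D.image til) ∩ C).card = 1 := by
    intro D hD
    obtain ⟨i, _, rfl⟩ := Finset.mem_image.1 hD
    exact hdual i
  have h1 : ∀ B ∈ σ.parts, ((B.image bar) ∩ C).card = 1 := hblocks
  -- pairwise disjointness of pieces
  have hpd1 : ∀ B ∈ σ.parts, ∀ B' ∈ σ.parts, B ≠ B' →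
      Disjoint (B.image bar) (B'.image bar) := fun B hB B' hB' hne =>
    image_disj (fun _ _ => bar_inj) (parts_disj hB hB' hne)
  have hpd2 : ∀ D ∈ Finset.univ.image (dcl σ), ∀ D' ∈ Finset.univ.image (dcl σ), D ≠ D' →
      Disjoint (D.image til) (D'.image til) := fun D hD D' hD' hne =>
    image_disj (fun _ _ => til_inj) (dcl_disj hD hD' hne)
  -- decomposition of C ∩ U1, C ∩ U2
  have hCU1 : C ∩ U1 = σ.parts.biUnion (fun B => (B.image bar) ∩ C) := by
    ext x
    simp only [hU1def, Finset.mem_inter, Finset.mem_biUnion]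
    tauto
  have hCU2 : C ∩ U2 = (Finset.univ.image (dcl σ)).biUnion (fun D => (D.image til) ∩ C) := by
    ext x
    simp only [hU2def, Finset.mem_inter, Finset.mem_biUnion]
    tauto
  have hcardCU1 : (C ∩ U1).card = σ.parts.card := by
    rw [hCU1, Finset.card_biUnion (fun B hB B' hB' hne =>
      Finset.disjoint_of_subset_left Finset.inter_subset_left
        (Finset.disjoint_of_subset_right Finset.inter_subset_left (hpd1 B hB B' hB' hne)))]
    rw [Finset.sum_congr rfl h1]
    simp
  have hcardCU2 : (C ∩ U2).card = (Finset.univ.image (dcl σ)).card := by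
    rw [hCU2, Finset.card_biUnion (fun D hD D' hD' hne =>
      Finset.disjoint_of_subset_left Finset.inter_subset_left
        (Finset.disjoint_of_subset_right Finset.inter_subset_left (hpd2 D hD D' hD' hne)))]
    rw [Finset.sum_congr rfl h2]
    simp
  have hmemU1 : ∀ x ∈ U1, ∃ u : Fin n, x = bar u := by
    intro x hx
    obtain ⟨B, _, hxB⟩ := Finset.mem_biUnion.1 hx
    obtain ⟨u, _, rfl⟩ := Finset.mem_image.1 hxB
    exact ⟨u, rfl⟩
  have hmemU2 : ∀ x ∈ U2, ∃ u : Fin n, x = til u := by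
    intro x hx
    obtain ⟨D, _, hxD⟩ := Finset.mem_biUnion.1 hx
    obtain ⟨u, _, rfl⟩ := Finset.mem_image.1 hxD
    exact ⟨u, rfl⟩
  have hdisjU : Disjoint (C ∩ U1) (C ∩ U2) := by
    rw [Finset.disjoint_left]
    intro x hx hx'
    obtain ⟨u, rfl⟩ := hmemU1 x (Finset.mem_inter.1 hx).2
    obtain ⟨w, hw⟩ := hmemU2 _ (Finset.mem_inter.1 hx').2
    exact bar_ne_til u w hw
  have hCcard : C.card = n + 1 := by
    rw [hCdef, Finset.card_sdiff_of_subset (Finset.subset_univ I), hcard]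
    have hn : 1 ≤ n := Fin.pos t
    simp only [Finset.card_univ, Fintype.card_fin]
    omega
  have hcount : σ.parts.card + (Finset.univ.image (dcl σ)).card = n + 1 := by
    rw [← card_MnS σ t, ← card_MdS σ t]
    have := count_key (t := t) hnc
    omega
  have hsub : C ⊆ U1 ∪ U2 := by
    have hinter : C ∩ (U1 ∪ U2) = (C ∩ U1) ∪ (C ∩ U2) := Finset.inter_union_distrib_left C U1 U2
    have hccard : (C ∩ (U1 ∪ U2)).card = C.card := by
      rw [hinter, Finset.card_union_of_disjoint hdisjU, hcardCU1, hcardCU2, hCcard, hcount]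
    have := Finset.eq_of_subset_of_card_le Finset.inter_subset_left (le_of_eq hccard.symm)
    exact Finset.inter_eq_left.1 this
  have hCeq : C = (C ∩ U1) ∪ (C ∩ U2) := by
    rw [← Finset.inter_union_distrib_left]
    exact (Finset.inter_eq_left.2 hsub).symm
  -- per-piece comparison
  have key1 : ∀ B ∈ σ.parts,
      (∑ x ∈ (B.image bar) ∩ C, v x) ≤ (∑ x ∈ maxAt (bar t) (B.image bar), v x) ∧
      ((∑ x ∈ (B.image bar) ∩ C, v x) = (∑ x ∈ maxAt (bar t) (B.image bar), v x) →
        (B.image bar) ∩ C = maxAt (bar t) (B.image bar)) := by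
    intro B hB
    have hBne := σ.nonempty_of_mem_parts hB
    obtain ⟨c0, hc0⟩ := Finset.card_eq_one.1 (h1 B hB)
    have hc0mem : c0 ∈ (B.image bar) ∩ C := by rw [hc0]; exact Finset.mem_singleton_self c0
    obtain ⟨u, hu, huc⟩ := Finset.mem_image.1 (Finset.mem_inter.1 hc0mem).1
    have hle : v c0 ≤ v (bar (amax t B)) := by
      rw [← huc, hv, v_bar, v_bar]
      have := amax_max (t := t) hBne u hu
      omega
    rw [hc0, maxAt_bar_eq hBne, Finset.sum_singleton, Finset.sum_singleton]
    refine ⟨hle, fun h => ?_⟩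
    have h' : vt (bar t) c0 = vt (bar t) (bar (amax t B)) := h
    rw [vt_inj h']
  have key2 : ∀ D ∈ Finset.univ.image (dcl σ),
      (∑ x ∈ (D.image til) ∩ C, v x) ≤ (∑ x ∈ maxAt (bar t) (D.image til), v x) ∧
      ((∑ x ∈ (D.image til) ∩ C, v x) = (∑ x ∈ maxAt (bar t) (D.image til), v x) →
        (D.image til) ∩ C = maxAt (bar t) (D.image til)) := by
    intro D hD
    obtain ⟨i, _, rfl⟩ := Finset.mem_image.1 hD
    have hDne : (dcl σ i).Nonempty := ⟨i, dcl_self σ i⟩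
    obtain ⟨c0, hc0⟩ := Finset.card_eq_one.1 (h2 _ hD)
    have hc0mem : c0 ∈ ((dcl σ i).image til) ∩ C := by
      rw [hc0]; exact Finset.mem_singleton_self c0
    obtain ⟨u, hu, huc⟩ := Finset.mem_image.1 (Finset.mem_inter.1 hc0mem).1
    have hle : v c0 ≤ v (til (amax t (dcl σ i))) := by
      rw [← huc, hv, v_til, v_til]
      have := amax_max (t := t) hDne u hu
      omega
    rw [hc0, maxAt_til_eq hDne, Finset.sum_singleton, Finset.sum_singleton]
    refine ⟨hle, fun h => ?_⟩
    have h' : vt (bar t) c0 = vt (bar t) (til (amax t (dcl σ i))) := h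
    rw [vt_inj h']
  -- sums over biUnions
  have hsum1 : (∑ x ∈ C ∩ U1, v x) = ∑ B ∈ σ.parts, ∑ x ∈ (B.image bar) ∩ C, v x := by
    rw [hCU1]
    exact Finset.sum_biUnion (fun B hB B' hB' hne =>
      Finset.disjoint_of_subset_left Finset.inter_subset_left
        (Finset.disjoint_of_subset_right Finset.inter_subset_left (hpd1 B hB B' hB' hne)))
  have hsum2 : (∑ x ∈ C ∩ U2, v x)
      = ∑ D ∈ Finset.univ.image (dcl σ), ∑ x ∈ (D.image til) ∩ C, v x := by
    rw [hCU2]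
    exact Finset.sum_biUnion (fun D hD D' hD' hne =>
      Finset.disjoint_of_subset_left Finset.inter_subset_left
        (Finset.disjoint_of_subset_right Finset.inter_subset_left (hpd2 D hD D' hD' hne)))
  have hsumR1 : (∑ x ∈ R1, v x) = ∑ B ∈ σ.parts, ∑ x ∈ maxAt (bar t) (B.image bar), v x := by
    rw [hR1def]
    exact Finset.sum_biUnion (fun B hB B' hB' hne =>
      Finset.disjoint_of_subset_left (Finset.filter_subset _ _)
        (Finset.disjoint_of_subset_right (Finset.filter_subset _ _) (hpd1 B hB B' hB' hne)))
  have hsumR2 : (∑ x ∈ R2, v x)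
      = ∑ D ∈ Finset.univ.image (dcl σ), ∑ x ∈ maxAt (bar t) (D.image til), v x := by
    rw [hR2def]
    exact Finset.sum_biUnion (fun D hD D' hD' hne =>
      Finset.disjoint_of_subset_left (Finset.filter_subset _ _)
        (Finset.disjoint_of_subset_right (Finset.filter_subset _ _) (hpd2 D hD D' hD' hne)))
  have hdisjR : Disjoint R1 R2 := by
    rw [Finset.disjoint_left]
    intro x hx hx'
    obtain ⟨u, rfl⟩ := mem_R1_even hx
    obtain ⟨w, hw⟩ := mem_R2_odd hx'
    exact bar_ne_til u w hw
  have hsumC : (∑ x ∈ C, v x) = (∑ x ∈ C ∩ U1, v x) + (∑ x ∈ C ∩ U2, v x) := by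
    conv_lhs => rw [hCeq]
    rw [Finset.sum_union hdisjU]
  have hsumRem : (∑ x ∈ Rem σ t, v x) = (∑ x ∈ R1, v x) + (∑ x ∈ R2, v x) := by
    rw [hRem, Finset.sum_union hdisjR]
  -- the comparison
  have hle1 : (∑ x ∈ C ∩ U1, v x) ≤ (∑ x ∈ R1, v x) := by
    rw [hsum1, hsumR1]
    exact Finset.sum_le_sum (fun B hB => (key1 B hB).1)
  have hle2 : (∑ x ∈ C ∩ U2, v x) ≤ (∑ x ∈ R2, v x) := by
    rw [hsum2, hsumR2]
    exact Finset.sum_le_sum (fun D hD => (key2 D hD).1)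
  have hCle : (∑ x ∈ C, v x) ≤ (∑ x ∈ Rem σ t, v x) := by
    rw [hsumC, hsumRem]; omega
  -- sums against complements
  have htot1 : (∑ x ∈ C, v x) + (∑ x ∈ I, v x) = ∑ x : Fin (2*n), v x := by
    rw [hCdef]
    exact Finset.sum_sdiff (Finset.subset_univ I)
  have htot2 : (∑ x ∈ Rem σ t, v x) + (∑ x ∈ IaP σ (bar t), v x) = ∑ x : Fin (2*n), v x := by
    have hIeq : IaP σ (bar t) = Finset.univ \ Rem σ t := IaP_eq σ t
    have := Finset.sum_sdiff (f := v) (Finset.subset_univ (Rem σ t))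
    rw [hIeq]
    omega
  constructor
  · omega
  · intro heq
    -- equality forces C = Rem
    have hCeq' : (∑ x ∈ C, v x) = (∑ x ∈ Rem σ t, v x) := by omega
    have heq1 : (∑ x ∈ C ∩ U1, v x) = (∑ x ∈ R1, v x) := by
      rw [hsumC, hsumRem] at hCeq'; omega
    have heq2 : (∑ x ∈ C ∩ U2, v x) = (∑ x ∈ R2, v x) := by
      rw [hsumC, hsumRem] at hCeq'; omega
    have hall1 := (Finset.sum_eq_sum_iff_of_le (fun B hB => (key1 B hB).1)).1
      (by rw [← hsum1, ← hsumR1]; exact heq1)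
    have hall2 := (Finset.sum_eq_sum_iff_of_le (fun D hD => (key2 D hD).1)).1
      (by rw [← hsum2, ← hsumR2]; exact heq2)
    have hU1eq : C ∩ U1 = R1 := by
      rw [hCU1, hR1def]
      exact Finset.biUnion_congr rfl (fun B hB => (key1 B hB).2 (hall1 B hB))
    have hU2eq : C ∩ U2 = R2 := by
      rw [hCU2, hR2def]
      exact Finset.biUnion_congr rfl (fun D hD => (key2 D hD).2 (hall2 D hD))
    have hCRem : C = Rem σ t := by rw [hCeq, hU1eq, hU2eq, hRem]
    have : Finset.univ \ C = I := by
      rw [hCdef, Finset.sdiff_sdiff_eq_self (Finset.subset_univ I)]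
    rw [← this, hCRem, ← IaP_eq]

end Concord

end St16
namespace St16

variable {n : ℕ}

section Reconstruct

variable {σ κ : NCP n} {t : Fin n}

/-- `vt t`-argmin of a finset -/
noncomputable def amin (t : Fin n) (B : Finset (Fin n)) : Fin n :=
  if h : B.Nonempty then (Finset.exists_min_image B (vt t) h).choose else t

lemma amin_mem {B : Finset (Fin n)} (h : B.Nonempty) : amin t B ∈ B := by
  rw [amin, dif_pos h]
  exact (Finset.exists_min_image B (vt t) h).choose_spec.1

lemma amin_min {B : Finset (Fin n)} (h : B.Nonempty) :
    ∀ y ∈ B, vt t (amin t B) ≤ vt t y := by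
  rw [amin, dif_pos h]
  exact (Finset.exists_min_image B (vt t) h).choose_spec.2

/-- open interval in shifted order -/
def IooT (t x z : Fin n) : Finset (Fin n) :=
  Finset.univ.filter (fun u => vt t x < vt t u ∧ vt t u < vt t z)

lemma mem_IooT {t x z u : Fin n} : u ∈ IooT t x z ↔ vt t x < vt t u ∧ vt t u < vt t z := by
  simp [IooT]

/-- any block other than the block of `x` meeting the open arc strictly between the
consecutive block elements `x < z` is contained in it -/
lemma block_inside (hnc : IsNoncrossing σ) {x z : Fin n} (hsb : sameBlock σ x z)
    {B' : Finset (Fin n)} (hB' : B' ∈ σ.parts) (hBne : B' ≠ blkOf σ x)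
    {u : Fin n} (hu : u ∈ B') (hu1 : vt t x < vt t u) (hu2 : vt t u < vt t z) :
    ∀ w ∈ B', vt t x < vt t w ∧ vt t w < vt t z := by
  intro w hw
  by_contra hcon
  push_neg at hcon
  rcases Nat.lt_or_ge (vt t w) (vt t x) with h | h
  · have hcr := lcross hnc t (sb_of_mem hB' hw hu) hsb h hu1 hu2
    exact hBne (blocks_eq_of_sb hB' (blkOf_mem_parts σ x) hw (mem_blkOf_self σ x) hcr)
  rcases Nat.eq_or_lt_of_le h with h' | h'
  · have hwx : w = x := vt_inj h'.symm
    exact hBne (blk_eq hB' (hwx ▸ hw))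
  have h2 := hcon h'
  rcases Nat.eq_or_lt_of_le h2 with h3 | h3
  · have hwz : w = z := (vt_inj h3).symm
    have hzB : z ∈ blkOf σ x := mem_blkOf_iff.2 hsb
    exact hBne (blocks_eq_of_sb hB' (blkOf_mem_parts σ x) hw hzB
      (hwz ▸ sb_refl σ w))
  · have hcr := lcross hnc t hsb (sb_of_mem hB' hu hw) hu1 hu2 h3
    exact hBne (blocks_eq_of_sb hB' (blkOf_mem_parts σ x) hu (mem_blkOf_self σ x)
      (sb_symm hcr))

/-- in a union-of-blocks window, there are as many block minima as block maxima -/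
lemma card_window (σ : NCP n) (t : Fin n) (W : Finset (Fin n))
    (hW : ∀ u ∈ W, blkOf σ u ⊆ W) :
    ((MnS σ t) ∩ W).card = ((MxS σ t) ∩ W).card := by
  have hmn : ((MnS σ t) ∩ W).card = (σ.parts.filter (fun B => B ⊆ W)).card := by
    refine Finset.card_bij (fun u _ => blkOf σ u) ?_ ?_ ?_
    · intro u hu
      rw [Finset.mem_inter] at hu
      exact Finset.mem_filter.2 ⟨blkOf_mem_parts σ u, hW u hu.2⟩
    · intro u1 h1 u2 h2 heq
      have heq' : blkOf σ u1 = blkOf σ u2 := heq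
      rw [Finset.mem_inter, mem_MnS] at h1 h2
      have hsb : sameBlock σ u1 u2 := mem_blkOf_iff.1 (heq' ▸ mem_blkOf_self σ u2)
      exact vt_inj (le_antisymm (h1.1 u2 hsb) (h2.1 u1 (sb_symm hsb)))
    · intro B hB
      rw [Finset.mem_filter] at hB
      have hBne := σ.nonempty_of_mem_parts hB.1
      refine ⟨amin t B, ?_, (blk_eq hB.1 (amin_mem hBne)).symm⟩
      rw [Finset.mem_inter, mem_MnS]
      refine ⟨?_, hB.2 (amin_mem hBne)⟩
      intro y hy
      have hyB : y ∈ B := by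
        rw [blk_eq hB.1 (amin_mem hBne)]
        exact mem_blkOf_iff.2 hy
      exact amin_min hBne y hyB
  have hmx : ((MxS σ t) ∩ W).card = (σ.parts.filter (fun B => B ⊆ W)).card := by
    refine Finset.card_bij (fun u _ => blkOf σ u) ?_ ?_ ?_
    · intro u hu
      rw [Finset.mem_inter] at hu
      exact Finset.mem_filter.2 ⟨blkOf_mem_parts σ u, hW u hu.2⟩
    · intro u1 h1 u2 h2 heq
      have heq' : blkOf σ u1 = blkOf σ u2 := heq
      rw [Finset.mem_inter, mem_MxS] at h1 h2
      have hsb : sameBlock σ u1 u2 := mem_blkOf_iff.1 (heq' ▸ mem_blkOf_self σ u2)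
      exact vt_inj (le_antisymm (h2.1 u1 (sb_symm hsb)) (h1.1 u2 hsb))
    · intro B hB
      rw [Finset.mem_filter] at hB
      have hBne := σ.nonempty_of_mem_parts hB.1
      refine ⟨amax t B, ?_, (blk_eq hB.1 (amax_mem hBne)).symm⟩
      rw [Finset.mem_inter, mem_MxS]
      refine ⟨?_, hB.2 (amax_mem hBne)⟩
      intro y hy
      have hyB : y ∈ B := by
        rw [blk_eq hB.1 (amax_mem hBne)]
        exact mem_blkOf_iff.2 hy
      exact amax_max hBne y hyB
  rw [hmn, hmx]

/-- the window property for the gap between consecutive elements of a block -/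
lemma gap_window (hnc : IsNoncrossing σ) {x z : Fin n} (hzB : z ∈ blkOf σ x)
    (hxz : vt t x < vt t z)
    (hmin : ∀ w ∈ blkOf σ x, vt t x < vt t w → vt t z ≤ vt t w) :
    ∀ u ∈ IooT t x z, blkOf σ u ⊆ IooT t x z := by
  intro u hu
  rw [mem_IooT] at hu
  have hBne : blkOf σ u ≠ blkOf σ x := by
    intro h
    have hum : u ∈ blkOf σ x := h ▸ mem_blkOf_self σ u
    exact absurd (hmin u hum hu.1) (by omega)
  intro w hw
  rw [mem_IooT]
  exact block_inside hnc (mem_blkOf_iff.1 hzB) (blkOf_mem_parts σ u) hBne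
    (mem_blkOf_self σ u) hu.1 hu.2 w hw

/-- strict imbalance for intermediate points -/
lemma gap_strict (hnc : IsNoncrossing σ) {x z : Fin n}
    (hWin : ∀ u ∈ IooT t x z, blkOf σ u ⊆ IooT t x z)
    {y : Fin n} (hy1 : vt t x < vt t y) (hy2 : vt t y < vt t z) (hyMn : y ∉ MnS σ t) :
    ((MxS σ t) ∩ IooT t x y).card < ((MnS σ t) ∩ IooT t x y).card := by
  have hyI : y ∈ IooT t x z := mem_IooT.2 ⟨hy1, hy2⟩
  have hyblk : blkOf σ y ⊆ IooT t x z := hWin y hyI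
  have hyne : (blkOf σ y).Nonempty := ⟨y, mem_blkOf_self σ y⟩
  set u0 : Fin n := amin t (blkOf σ y) with hu0
  have hu0mem : u0 ∈ blkOf σ y := amin_mem hyne
  have hu0Mn : u0 ∈ MnS σ t := by
    rw [mem_MnS]
    intro w hw
    have hwB : w ∈ blkOf σ y := by
      rw [blk_eq (blkOf_mem_parts σ y) hu0mem]
      exact mem_blkOf_iff.2 hw
    exact amin_min hyne w hwB
  have hu0y : vt t u0 < vt t y := by
    have hle : vt t u0 ≤ vt t y := amin_min hyne y (mem_blkOf_self σ y)
    rcases Nat.eq_or_lt_of_le hle with h | h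
    · exact absurd ((vt_inj h) ▸ hu0Mn) hyMn
    · exact h
  have hu0x : vt t x < vt t u0 := (mem_IooT.1 (hyblk hu0mem)).1
  have hu0I : u0 ∈ (MnS σ t) ∩ IooT t x y :=
    Finset.mem_inter.2 ⟨hu0Mn, mem_IooT.2 ⟨hu0x, hu0y⟩⟩
  -- injection from MxS ∩ Ioo(x,y) into (MnS ∩ Ioo(x,y)).erase u0
  have hinj : ∀ w ∈ (MxS σ t) ∩ IooT t x y,
      amin t (blkOf σ w) ∈ ((MnS σ t) ∩ IooT t x y).erase u0 := by
    intro w hw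
    rw [Finset.mem_inter, mem_IooT] at hw
    have hwne : (blkOf σ w).Nonempty := ⟨w, mem_blkOf_self σ w⟩
    have hwI : w ∈ IooT t x z := mem_IooT.2 ⟨hw.2.1, by omega⟩
    have hwblk : blkOf σ w ⊆ IooT t x z := hWin w hwI
    have hmMn : amin t (blkOf σ w) ∈ MnS σ t := by
      rw [mem_MnS]
      intro p hp
      have hpB : p ∈ blkOf σ w := by
        rw [blk_eq (blkOf_mem_parts σ w) (amin_mem hwne)]
        exact mem_blkOf_iff.2 hp
      exact amin_min hwne p hpB
    have hmI : amin t (blkOf σ w) ∈ IooT t x y := by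
      rw [mem_IooT]
      have h1 := (mem_IooT.1 (hwblk (amin_mem (t := t) hwne))).1
      have h2 : vt t (amin t (blkOf σ w)) ≤ vt t w := amin_min hwne w (mem_blkOf_self σ w)
      exact ⟨h1, by omega⟩
    rw [Finset.mem_erase]
    refine ⟨?_, Finset.mem_inter.2 ⟨hmMn, hmI⟩⟩
    intro heq
    -- then blkOf w = blkOf y, but w is the max of its block and vt w < vt y
    have hu0w : u0 ∈ blkOf σ w := heq ▸ amin_mem hwne
    have hBeq : blkOf σ w = blkOf σ y :=
      blocks_eq_of_sb (blkOf_mem_parts σ w) (blkOf_mem_parts σ y) hu0w hu0mem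
        (heq ▸ sb_refl σ u0)
    have hyw : sameBlock σ w y := by
      refine ⟨blkOf σ w, blkOf_mem_parts σ w, mem_blkOf_self σ w, ?_⟩
      rw [hBeq]
      exact mem_blkOf_self σ y
    have hwMx := hw.1
    rw [mem_MxS] at hwMx
    exact absurd (hwMx y hyw) (by omega)
  have hinjOn : ∀ w1 ∈ (MxS σ t) ∩ IooT t x y, ∀ w2 ∈ (MxS σ t) ∩ IooT t x y,
      amin t (blkOf σ w1) = amin t (blkOf σ w2) → w1 = w2 := by
    intro w1 h1 w2 h2 heq
    have hw1ne : (blkOf σ w1).Nonempty := ⟨w1, mem_blkOf_self σ w1⟩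
    have hw2ne : (blkOf σ w2).Nonempty := ⟨w2, mem_blkOf_self σ w2⟩
    have hm1 : amin t (blkOf σ w1) ∈ blkOf σ w1 := amin_mem hw1ne
    have hm2 : amin t (blkOf σ w1) ∈ blkOf σ w2 := heq ▸ amin_mem hw2ne
    have hBeq : blkOf σ w1 = blkOf σ w2 :=
      blocks_eq_of_sb (blkOf_mem_parts σ w1) (blkOf_mem_parts σ w2) hm1 hm2 (sb_refl σ _)
    have hsb : sameBlock σ w1 w2 := by
      refine ⟨blkOf σ w1, blkOf_mem_parts σ w1, mem_blkOf_self σ w1, ?_⟩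
      rw [hBeq]
      exact mem_blkOf_self σ w2
    rw [Finset.mem_inter, mem_MxS] at h1 h2
    exact vt_inj (le_antisymm (h2.1 w1 (sb_symm hsb)) (h1.1 w2 hsb))
  have hcard : ((MxS σ t) ∩ IooT t x y).card ≤ (((MnS σ t) ∩ IooT t x y).erase u0).card := by
    refine Finset.card_le_card_of_injOn (fun w => amin t (blkOf σ w)) (fun w hw => hinj w hw) ?_
    intro w1 h1 w2 h2 heq
    exact hinjOn w1 h1 w2 h2 heq
  have herase : (((MnS σ t) ∩ IooT t x y).erase u0).card
      = ((MnS σ t) ∩ IooT t x y).card - 1 := Finset.card_erase_of_mem hu0I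
  have hpos : 0 < ((MnS σ t) ∩ IooT t x y).card := Finset.card_pos.2 ⟨u0, hu0I⟩
  omega

end Reconstruct

end St16
namespace St16

variable {n : ℕ}

section Inj

variable {σ κ : NCP n} {t : Fin n}

lemma nxt_spec (hnc : IsNoncrossing σ) {x z : Fin n} (hzB : z ∈ blkOf σ x)
    (hxz : vt t x < vt t z)
    (hmin : ∀ w ∈ blkOf σ x, vt t x < vt t w → vt t z ≤ vt t w) :
    (z ∉ MnS σ t ∧ ((MnS σ t) ∩ IooT t x z).card = ((MxS σ t) ∩ IooT t x z).card) ∧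
    ∀ y, vt t x < vt t y → vt t y < vt t z →
      ¬(y ∉ MnS σ t ∧ ((MnS σ t) ∩ IooT t x y).card = ((MxS σ t) ∩ IooT t x y).card) := by
  have hWin := gap_window hnc hzB hxz hmin
  refine ⟨⟨?_, card_window σ t _ hWin⟩, ?_⟩
  · intro hz
    rw [mem_MnS] at hz
    have := hz x (sb_symm (mem_blkOf_iff.1 hzB))
    omega
  · rintro y h1 h2 ⟨hyMn, hbal⟩
    have := gap_strict hnc hWin h1 h2 hyMn
    omega

lemma nxt_unique (hncσ : IsNoncrossing σ) (hncκ : IsNoncrossing κ)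
    (hMn : MnS σ t = MnS κ t) (hMx : MxS σ t = MxS κ t)
    {x z z' : Fin n}
    (hzB : z ∈ blkOf σ x) (hxz : vt t x < vt t z)
    (hminz : ∀ w ∈ blkOf σ x, vt t x < vt t w → vt t z ≤ vt t w)
    (hz'B : z' ∈ blkOf κ x) (hxz' : vt t x < vt t z')
    (hminz' : ∀ w ∈ blkOf κ x, vt t x < vt t w → vt t z' ≤ vt t w) : z = z' := by
  have s1 := nxt_spec (t := t) hncσ hzB hxz hminz
  have s2 := nxt_spec (t := t) hncκ hz'B hxz' hminz'
  rw [← hMn, ← hMx] at s2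
  rcases lt_trichotomy (vt t z) (vt t z') with h | h | h
  · exact absurd s1.1 (s2.2 z hxz h)
  · exact vt_inj h
  · exact absurd s2.1 (s1.2 z' hxz' h)

lemma sb_imp (hncσ : IsNoncrossing σ) (hncκ : IsNoncrossing κ)
    (hMn : MnS σ t = MnS κ t) (hMx : MxS σ t = MxS κ t) :
    ∀ g : ℕ, ∀ x y : Fin n, sameBlock σ x y → vt t x ≤ vt t y → vt t y - vt t x ≤ g →
      sameBlock κ x y := by
  intro g
  induction g with
  | zero =>
    intro x y hsb hle hg
    have hxy : x = y := vt_inj (t := t) (by omega)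
    exact hxy ▸ sb_refl κ x
  | succ g ih =>
    intro x y hsb hle hg
    rcases Nat.eq_or_lt_of_le hle with he | hlt
    · exact (vt_inj he) ▸ sb_refl κ x
    have hxMx : x ∉ MxS σ t := by
      intro h
      have h2 := ((mem_MxS (t := t)).1 h) y hsb
      omega
    -- next element of x in σ
    have hSne : ((blkOf σ x).filter (fun w => vt t x < vt t w)).Nonempty :=
      ⟨y, Finset.mem_filter.2 ⟨mem_blkOf_iff.2 hsb, hlt⟩⟩
    set z := amin t ((blkOf σ x).filter (fun w => vt t x < vt t w)) with hzdef
    have hzS := Finset.mem_filter.1 (amin_mem (t := t) hSne)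
    have hzB : z ∈ blkOf σ x := hzS.1
    have hxz : vt t x < vt t z := hzS.2
    have hminz : ∀ w ∈ blkOf σ x, vt t x < vt t w → vt t z ≤ vt t w := fun w hw hvw =>
      amin_min hSne w (Finset.mem_filter.2 ⟨hw, hvw⟩)
    -- next element of x in κ
    have hxMxκ : x ∉ MxS κ t := hMx ▸ hxMx
    have hex : ∃ y', sameBlock κ x y' ∧ vt t x < vt t y' := by
      rw [mem_MxS] at hxMxκ
      push_neg at hxMxκ
      obtain ⟨y', h1, h2⟩ := hxMxκ
      exact ⟨y', h1, h2⟩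
    obtain ⟨y', hy'sb, hy'⟩ := hex
    have hS'ne : ((blkOf κ x).filter (fun w => vt t x < vt t w)).Nonempty :=
      ⟨y', Finset.mem_filter.2 ⟨mem_blkOf_iff.2 hy'sb, hy'⟩⟩
    set z' := amin t ((blkOf κ x).filter (fun w => vt t x < vt t w)) with hz'def
    have hz'S := Finset.mem_filter.1 (amin_mem (t := t) hS'ne)
    have hz'B : z' ∈ blkOf κ x := hz'S.1
    have hxz' : vt t x < vt t z' := hz'S.2
    have hminz' : ∀ w ∈ blkOf κ x, vt t x < vt t w → vt t z' ≤ vt t w := fun w hw hvw =>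
      amin_min hS'ne w (Finset.mem_filter.2 ⟨hw, hvw⟩)
    have hzz' : z = z' := nxt_unique hncσ hncκ hMn hMx hzB hxz hminz hz'B hxz' hminz'
    have hκxz : sameBlock κ x z := by
      rw [hzz']
      exact mem_blkOf_iff.1 hz'B
    rcases eq_or_ne z y with rfl | hne
    · exact hκxz
    · have hzy : vt t z ≤ vt t y := hminz y (mem_blkOf_iff.2 hsb) hlt
      have hzy' : vt t z < vt t y := lt_of_le_of_ne hzy (fun h => hne (vt_inj h))
      have hsbzy : sameBlock σ z y := sb_trans (sb_symm (mem_blkOf_iff.1 hzB)) hsb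
      exact sb_trans hκxz (ih z y hsbzy (le_of_lt hzy') (by omega))

lemma NCP_eq_of_M (hncσ : IsNoncrossing σ) (hncκ : IsNoncrossing κ)
    (hMn : MnS σ t = MnS κ t) (hMx : MxS σ t = MxS κ t) : σ = κ := by
  have h1 : ∀ x y, sameBlock σ x y → sameBlock κ x y := by
    intro x y hsb
    rcases le_or_gt (vt t x) (vt t y) with h | h
    · exact sb_imp hncσ hncκ hMn hMx (vt t y - vt t x) x y hsb h (le_refl _)
    · exact sb_symm
        (sb_imp hncσ hncκ hMn hMx (vt t x - vt t y) y x (sb_symm hsb) (le_of_lt h) (le_refl _))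
  have h2 : ∀ x y, sameBlock κ x y → sameBlock σ x y := by
    intro x y hsb
    rcases le_or_gt (vt t x) (vt t y) with h | h
    · exact sb_imp hncκ hncσ hMn.symm hMx.symm (vt t y - vt t x) x y hsb h (le_refl _)
    · exact sb_symm
        (sb_imp hncκ hncσ hMn.symm hMx.symm (vt t x - vt t y) y x (sb_symm hsb) (le_of_lt h)
          (le_refl _))
  have hsub : ∀ (σ' κ' : NCP n), (∀ x y, sameBlock σ' x y → sameBlock κ' x y) →
      (∀ x y, sameBlock κ' x y → sameBlock σ' x y) → σ'.parts ⊆ κ'.parts := by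
    intro σ' κ' hf hbw B hB
    obtain ⟨b, hbB⟩ := σ'.nonempty_of_mem_parts hB
    have hBb : B = blkOf σ' b := blk_eq hB hbB
    have hblk : blkOf σ' b = blkOf κ' b := by
      ext u
      rw [mem_blkOf_iff, mem_blkOf_iff]
      exact ⟨hf b u, hbw b u⟩
    rw [hBb, hblk]
    exact blkOf_mem_parts κ' b
  exact Finpartition.ext (Finset.Subset.antisymm (hsub σ κ h1 h2) (hsub κ σ h2 h1))

lemma MnS_of_MdS [NeZero n] (hncσ : IsNoncrossing σ) (hncκ : IsNoncrossing κ)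
    (hMd : MdS σ t = MdS κ t) : MnS σ t = MnS κ t := by
  ext y
  by_cases hyt : y = t
  · rw [hyt]
    exact ⟨fun _ => t_mem_MnS κ t, fun _ => t_mem_MnS σ t⟩
  have key : ∀ (π : NCP n), IsNoncrossing π → (y ∈ MnS π t ↔ (y - 1) ∉ MdS π t) := by
    intro π hnc
    have hy1 : (y - 1) + 1 = y := sub_add_cancel y 1
    have hnt : y - 1 ≠ t - 1 := by
      intro h
      apply hyt
      rw [← hy1, h, sub_add_cancel]
    have hvlt : vt t (y - 1) < n - 1 := by
      have h2 : vt t (y - 1) ≠ n - 1 := fun h => hnt (vt_inj (h.trans (vt_top t).symm))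
      have := vt_lt t (y - 1)
      omega
    rw [MdS_char hnc]
    simp only [Finset.mem_insert, Finset.mem_filter, Finset.mem_univ, true_and]
    constructor
    · intro hMn hcon
      rcases hcon with h | ⟨_, h2⟩
      · exact hnt h
      · rw [hy1] at h2
        exact h2 hMn
    · intro hnot
      by_contra hMn
      exact hnot (Or.inr ⟨hvlt, by rw [hy1]; exact hMn⟩)
  rw [key σ hncσ, key κ hncκ, hMd]

lemma IaP_inj [NeZero n] (hncσ : IsNoncrossing σ) (hncκ : IsNoncrossing κ)
    (h : IaP σ (bar t) = IaP κ (bar t)) : σ = κ := by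
  have hRem : Rem σ t = Rem κ t := by
    rw [← IaP_compl σ t, ← IaP_compl κ t, h]
  have hMx : MxS σ t = MxS κ t := by
    ext x
    rw [← bar_mem_Rem_iff, ← bar_mem_Rem_iff, hRem]
  have hMd : MdS σ t = MdS κ t := by
    ext x
    rw [← til_mem_Rem_iff, ← til_mem_Rem_iff, hRem]
  exact NCP_eq_of_M hncσ hncκ (MnS_of_MdS hncσ hncκ hMd) hMx

end Inj

end St16
namespace St16

variable {n : ℕ}

section Main

variable {σ : NCP n} {t : Fin n}

lemma main_a [NeZero n] (t : Fin n) (X : Matrix (Fin (n-1)) (Fin (2*n)) ℝ)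
    (hcol : ∀ r, X r (bar t) = 0)
    (L : NCP n → ℝ)
    (hL : ∀ I : Finset (Fin (2*n)), I.card = n-1 → minorOn X I = ∑ᶠ σ ∈ ESet I, L σ) :
    ∀ σ : NCP n, IsNoncrossing σ → ({t} : Finset (Fin n)) ∉ σ.parts → L σ = 0 := by
  suffices H : ∀ N : ℕ, ∀ σ : NCP n, IsNoncrossing σ → ({t} : Finset (Fin n)) ∉ σ.parts →
      (∑ x ∈ IaP σ (bar t), vt (bar t) x) < N → L σ = 0 by
    intro σ h1 h2
    exact H ((∑ x ∈ IaP σ (bar t), vt (bar t) x) + 1) σ h1 h2 (Nat.lt_succ_self _)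
  intro N
  induction N with
  | zero => intro σ _ _ h; omega
  | succ N ih =>
    intro σ hnc hsing hw
    set I := IaP σ (bar t) with hI
    have hcard : I.card = n - 1 := card_IaP hnc
    have hbt : bar t ∈ I := bar_t_mem_IaP hsing
    have hconc : Concordant σ I := concord_IaP hnc
    have hminor : minorOn X I = 0 := by
      rw [minorOn, dif_pos hcard]
      have hmem : bar t ∈ Set.range (I.orderEmbOfFin hcard) := by
        rw [Finset.range_orderEmbOfFin]
        exact Finset.mem_coe.2 hbt
      obtain ⟨c, hc⟩ := hmem
      apply Matrix.det_eq_zero_of_column_eq_zero c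
      intro r
      show X r (I.orderEmbOfFin hcard c) = 0
      rw [hc]
      exact hcol r
    have hsum := hL I hcard
    rw [hminor] at hsum
    rw [← Set.coe_toFinset (ESet (n := n) I), finsum_mem_coe_finset] at hsum
    have hσmem : σ ∈ (ESet (n := n) I).toFinset := Set.mem_toFinset.2 ⟨hnc, hconc⟩
    rw [← Finset.add_sum_erase _ L hσmem] at hsum
    have hzero : ∀ κ ∈ ((ESet (n := n) I).toFinset).erase σ, L κ = 0 := by
      intro κ hκ
      rw [Finset.mem_erase, Set.mem_toFinset] at hκ
      obtain ⟨hne, hκnc, hκc⟩ := hκ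
      have hκsing : ({t} : Finset (Fin n)) ∉ κ.parts := by
        intro hs
        exact absurd hbt (singleton_not_concord hs hκc)
      have hwκ := weight_main (t := t) hκnc hκc
      have hlt : (∑ x ∈ IaP κ (bar t), vt (bar t) x) < ∑ x ∈ I, vt (bar t) x := by
        rcases Nat.eq_or_lt_of_le hwκ.1 with he | hl
        · exfalso
          have hIaPeq : IaP κ (bar t) = IaP σ (bar t) := by
            rw [← hwκ.2 he, hI]
          exact hne (IaP_inj hκnc hnc hIaPeq)
        · exact hl
      exact ih κ hκnc hκsing (by omega)
    rw [Finset.sum_eq_zero hzero, add_zero] at hsum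
    exact hsum.symm

lemma dual_pred [NeZero n] (hsing : ({t} : Finset (Fin n)) ∈ σ.parts) (hne' : t - 1 ≠ t) :
    dualRel σ (t - 1) t := by
  right
  rintro ⟨B, hB, ⟨p, hp⟩, ⟨q, hq⟩⟩
  rw [Finset.mem_inter] at hp hq
  obtain ⟨hpB, hparc⟩ := hp
  obtain ⟨hqB, hqarc⟩ := hq
  have htop : vt t (t - 1) = n - 1 := vt_top t
  have h0 : vt t t = 0 := vt_self t
  have hn2 : 2 ≤ n := by
    rcases Nat.lt_or_ge n 2 with h | h
    · exact absurd (vt_inj (t := t) (show vt t (t - 1) = vt t t by omega)) hne'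
    · exact h
  rw [mem_cIoc_vt t hne' p, htop, h0, if_neg (by omega)] at hparc
  have hpt : p = t := by
    have hplt := vt_lt t p
    exact vt_inj (t := t) (show vt t p = vt t t by omega)
  have hBt : B = {t} := σ.eq_of_mem_parts hB hsing (hpt ▸ hpB) (Finset.mem_singleton_self t)
  rw [mem_cIoc_vt t (Ne.symm hne') q, htop, h0, if_pos (by omega)] at hqarc
  have hqt : q = t := Finset.mem_singleton.1 (hBt ▸ hqB)
  rw [hqt, h0] at hqarc
  omega

lemma swap_concord [NeZero n] (hsing : ({t} : Finset (Fin n)) ∈ σ.parts)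
    {I : Finset (Fin (2*n))} (hem : til (t - 1) ∈ I) (hep : til t ∉ I) :
    Concordant σ I ↔ Concordant σ (insert (til t) (I.erase (til (t - 1)))) := by
  set em : Fin (2*n) := til (t - 1) with hemdef
  set ep : Fin (2*n) := til t with hepdef
  set I' : Finset (Fin (2*n)) := insert ep (I.erase em) with hI'def
  have hne : em ≠ ep := fun h => hep (h ▸ hem)
  have hne' : t - 1 ≠ t := fun h => hne (congrArg til h)
  have hd : dualRel σ (t - 1) t := dual_pred hsing hne'
  have hmemI' : ∀ x : Fin (2*n), x ∈ I' ↔ (x = ep ∨ (x ≠ em ∧ x ∈ I)) := by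
    intro x
    rw [hI'def, Finset.mem_insert, Finset.mem_erase]
  have hepI' : ep ∈ I' := by rw [hmemI']; exact Or.inl rfl
  have hemI' : em ∉ I' := by
    rw [hmemI']
    rintro (h | ⟨h, _⟩)
    · exact hne h
    · exact h rfl
  have hC : ∀ x : Fin (2*n), x ≠ em → x ≠ ep → (x ∈ I ↔ x ∈ I') := by
    intro x h1 h2
    rw [hmemI']
    constructor
    · intro h; exact Or.inr ⟨h1, h⟩
    · rintro (h | ⟨_, h⟩)
      · exact absurd h h2
      · exact h
  have hcardI' : I'.card = I.card := by
    rw [hI'def, Finset.card_insert_of_notMem (fun h => hep (Finset.mem_of_mem_erase h)),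
      Finset.card_erase_of_mem hem]
    have : 0 < I.card := Finset.card_pos.2 ⟨em, hem⟩
    omega
  have h2eq : ∀ B : Finset (Fin n),
      ((B.image bar) ∩ (Finset.univ \ I')).card = ((B.image bar) ∩ (Finset.univ \ I)).card := by
    intro B
    congr 1
    ext x
    rw [Finset.mem_inter, Finset.mem_inter, Finset.mem_sdiff, Finset.mem_sdiff]
    constructor <;> rintro ⟨hx1, _, hx2⟩ <;>
      obtain ⟨u, _, rfl⟩ := Finset.mem_image.1 hx1
    · refine ⟨hx1, Finset.mem_univ _, fun hcon => hx2 ?_⟩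
      rw [← hC (bar u) (bar_ne_til u (t-1)) (bar_ne_til u t)] at *
      exact hcon
    · refine ⟨hx1, Finset.mem_univ _, fun hcon => hx2 ?_⟩
      rw [hC (bar u) (bar_ne_til u (t-1)) (bar_ne_til u t)] at *
      exact hcon
  have h3eq : ∀ i : Fin n,
      (((Finset.univ.filter (dualRel σ i)).image til) ∩ (Finset.univ \ I')).card
      = (((Finset.univ.filter (dualRel σ i)).image til) ∩ (Finset.univ \ I)).card := by
    intro i
    show (((dcl σ i).image til) ∩ (Finset.univ \ I')).card
      = (((dcl σ i).image til) ∩ (Finset.univ \ I)).card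
    by_cases hcase : (t - 1) ∈ dcl σ i
    · -- the class contains both t-1 and t; swap bijection
      have htin : t ∈ dcl σ i := mem_dcl.2 (dr_trans (mem_dcl.1 hcase) hd)
      have hemim : em ∈ (dcl σ i).image til := Finset.mem_image.2 ⟨t - 1, hcase, rfl⟩
      have hepim : ep ∈ (dcl σ i).image til := Finset.mem_image.2 ⟨t, htin, rfl⟩
      symm
      refine Finset.card_bij (fun x _ => if x = ep then em else x) ?_ ?_ ?_
      · intro x hx
        rw [Finset.mem_inter, Finset.mem_sdiff] at hx
        have hxI : x ∉ I := hx.2.2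
        have hxem : x ≠ em := fun h => hxI (h ▸ hem)
        show (if x = ep then em else x) ∈ (dcl σ i).image til ∩ (Finset.univ \ I')
        by_cases hxep : x = ep
        · rw [if_pos hxep]
          rw [Finset.mem_inter, Finset.mem_sdiff]
          exact ⟨hemim, Finset.mem_univ _, hemI'⟩
        · rw [if_neg hxep]
          rw [Finset.mem_inter, Finset.mem_sdiff]
          refine ⟨hx.1, Finset.mem_univ _, fun hcon => hxI ?_⟩
          rw [hC x hxem hxep]
          exact hcon
      · intro x1 h1 x2 h2 heq
        rw [Finset.mem_inter, Finset.mem_sdiff] at h1 h2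
        have hx1em : x1 ≠ em := fun h => h1.2.2 (h ▸ hem)
        have hx2em : x2 ≠ em := fun h => h2.2.2 (h ▸ hem)
        have heq' : (if x1 = ep then em else x1) = (if x2 = ep then em else x2) := heq
        by_cases hx1ep : x1 = ep <;> by_cases hx2ep : x2 = ep
        · rw [hx1ep, hx2ep]
        · rw [if_pos hx1ep, if_neg hx2ep] at heq'
          exact absurd heq'.symm hx2em
        · rw [if_neg hx1ep, if_pos hx2ep] at heq'
          exact absurd heq' hx1em
        · rwa [if_neg hx1ep, if_neg hx2ep] at heq' 
      · intro y hy
        rw [Finset.mem_inter, Finset.mem_sdiff] at hy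
        have hyI' : y ∉ I' := hy.2.2
        have hyep : y ≠ ep := fun h => hyI' (h ▸ hepI')
        by_cases hyem : y = em
        · refine ⟨ep, Finset.mem_inter.2 ⟨hepim, Finset.mem_sdiff.2 ⟨Finset.mem_univ _, hep⟩⟩, ?_⟩
          show (if ep = ep then em else ep) = y
          rw [if_pos rfl, hyem]
        · refine ⟨y, ?_, ?_⟩
          · rw [Finset.mem_inter, Finset.mem_sdiff]
            refine ⟨hy.1, Finset.mem_univ _, fun hcon => hyI' ?_⟩
            rw [← hC y hyem hyep]
            exact hcon
          · show (if y = ep then em else y) = y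
            rw [if_neg hyep]
    · -- the class contains neither t-1 nor t
      have htout : t ∉ dcl σ i := fun h =>
        hcase (mem_dcl.2 (dr_trans (mem_dcl.1 h) (dr_symm hd)))
      have hemim : em ∉ (dcl σ i).image til := by
        intro h
        obtain ⟨u, hu, huh⟩ := Finset.mem_image.1 h
        rw [til_inj huh] at hu
        exact hcase hu
      have hepim : ep ∉ (dcl σ i).image til := by
        intro h
        obtain ⟨u, hu, huh⟩ := Finset.mem_image.1 h
        rw [til_inj huh] at hu
        exact htout hu
      congr 1
      ext x
      rw [Finset.mem_inter, Finset.mem_inter, Finset.mem_sdiff, Finset.mem_sdiff]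
      constructor <;> rintro ⟨hx1, _, hx2⟩ <;>
        refine ⟨hx1, Finset.mem_univ _, fun hcon => hx2 ?_⟩
      · rw [← hC x (fun h => hemim (h ▸ hx1)) (fun h => hepim (h ▸ hx1))]
        exact hcon
      · rw [hC x (fun h => hemim (h ▸ hx1)) (fun h => hepim (h ▸ hx1))]
        exact hcon
  constructor
  · rintro ⟨c1, c2, c3⟩
    refine ⟨by rw [hcardI', c1], fun B hB => ?_, fun i => ?_⟩
    · rw [h2eq B]; exact c2 B hB
    · rw [h3eq i]; exact c3 i
  · rintro ⟨c1, c2, c3⟩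
    refine ⟨by rw [← hcardI', c1], fun B hB => ?_, fun i => ?_⟩
    · rw [← h2eq B]; exact c2 B hB
    · rw [← h3eq i]; exact c3 i

lemma main_b [NeZero n] (t : Fin n)
    (L : NCP n → ℝ)
    (hLzero : ∀ σ : NCP n, IsNoncrossing σ → ({t} : Finset (Fin n)) ∉ σ.parts → L σ = 0)
    {I : Finset (Fin (2*n))} (hem : til (t - 1) ∈ I) (hep : til t ∉ I) :
    (∑ᶠ σ ∈ ESet (n := n) I, L σ)
      = ∑ᶠ σ ∈ ESet (n := n) (insert (til t) (I.erase (til (t - 1)))), L σ := by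
  set I' : Finset (Fin (2*n)) := insert (til t) (I.erase (til (t - 1))) with hI'def
  rw [← Set.coe_toFinset (ESet (n := n) I), finsum_mem_coe_finset]
  rw [← Set.coe_toFinset (ESet (n := n) I'), finsum_mem_coe_finset]
  have key : ∀ J : Finset (Fin (2*n)),
      (∑ κ ∈ (ESet (n := n) J).toFinset, L κ)
      = ∑ κ ∈ (ESet (n := n) J).toFinset.filter
          (fun κ => ({t} : Finset (Fin n)) ∈ κ.parts), L κ := by
    intro J
    symm
    refine Finset.sum_subset (Finset.filter_subset _ _) ?_
    intro κ hκ hκn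
    rw [Set.mem_toFinset] at hκ
    rw [Finset.mem_filter, Set.mem_toFinset] at hκn
    have : ({t} : Finset (Fin n)) ∉ κ.parts := fun h => hκn ⟨hκ, h⟩
    exact hLzero κ hκ.1 this
  rw [key I, key I']
  congr 1
  ext κ
  rw [Finset.mem_filter, Finset.mem_filter, Set.mem_toFinset, Set.mem_toFinset]
  constructor
  · rintro ⟨⟨hκnc, hκc⟩, hs⟩
    exact ⟨⟨hκnc, (swap_concord hs hem hep).1 hκc⟩, hs⟩
  · rintro ⟨⟨hκnc, hκc⟩, hs⟩
    exact ⟨⟨hκnc, (swap_concord hs hem hep).2 hκc⟩, hs⟩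

end Main

end St16
theorem stmt16 (n k : ℕ) (hk1 : 1 ≤ k) (hkn : k ≤ n)
    (X : Matrix (Fin (n-1)) (Fin (2*n)) ℝ)
    (hcol : ∀ r : Fin (n-1), X r ⟨2*k-2, by omega⟩ = 0)
    (L : NCP n → ℝ)
    (hL : ∀ I : Finset (Fin (2*n)), I.card = n-1 → minorOn X I = ∑ᶠ σ ∈ ESet I, L σ) :
    (∀ σ : NCP n, IsNoncrossing σ →
      ({(⟨k-1, by omega⟩ : Fin n)} : Finset (Fin n)) ∉ σ.parts → L σ = 0) ∧
    (∀ em ep : Fin (2*n), (em:ℕ) = (2*k + 2*n - 3) % (2*n) → (ep:ℕ) = 2*k - 1 →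
      ∀ I : Finset (Fin (2*n)), I.card = n-1 → em ∈ I → ep ∉ I →
        minorOn X I = minorOn X (insert ep (I.erase em))) := by
  have hn : 1 ≤ n := le_trans hk1 hkn
  haveI : NeZero n := ⟨by omega⟩
  set t : Fin n := ⟨k-1, by omega⟩ with ht
  have hbar : bar t = (⟨2*k-2, by omega⟩ : Fin (2*n)) := by
    apply Fin.ext
    show 2 * (k-1) = 2*k-2
    omega
  have hcol' : ∀ r, X r (bar t) = 0 := by
    intro r
    rw [hbar]
    exact hcol r
  have hA := St16.main_a t X hcol' L hL
  refine ⟨hA, ?_⟩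
  intro em ep hemv hepv I hcard hem hep
  have hept : ep = til t := by
    apply Fin.ext
    rw [hepv]
    show 2*k-1 = 2*(k-1)+1
    omega
  have hemt : em = til (t - 1) := by
    apply Fin.ext
    rw [hemv]
    show (2*k+2*n-3) % (2*n) = 2 * ((t - 1 : Fin n) : ℕ) + 1
    have hvt : ((t - 1 : Fin n) : ℕ) = if k = 1 then n - 1 else k - 2 := by
      rw [St16.fin_sub_val]
      have h1 : ((1 : Fin n) : ℕ) = 1 % n := Fin.val_one' n
      have h2 : 1 % n = if n = 1 then 0 else 1 := by
        split_ifs with h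
        · rw [h]
        · exact Nat.mod_eq_of_lt (by omega)
      have ht1 : (t : ℕ) = k - 1 := rfl
      rw [h1, h2]
      split_ifs <;> omega
    rw [hvt]
    by_cases hk1' : k = 1
    · rw [if_pos hk1', hk1']
      have h4 : 2*1+2*n-3 = 2*n-1 := by omega
      rw [h4, Nat.mod_eq_of_lt (by omega)]
      omega
    · rw [if_neg hk1']
      have h3 : 2*k+2*n-3 = (2*k-3) + 2*n := by omega
      rw [h3, Nat.add_mod_right, Nat.mod_eq_of_lt (by omega)]
      omega
  rw [hept] at hep
  rw [hemt] at hem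
  rw [hept, hemt]
  have hcard' : (insert (til t) (I.erase (til (t-1)))).card = n - 1 := by
    rw [Finset.card_insert_of_notMem (fun h => hep (Finset.mem_of_mem_erase h)),
      Finset.card_erase_of_mem hem, hcard]
    have hpos : 0 < I.card := Finset.card_pos.2 ⟨_, hem⟩
    omega
  rw [hL I hcard, hL _ hcard']
  exact St16.main_b t L hA hem hep
end
end
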